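/- Associativity of parallel composition modulo ACP_drt^τ: for all closed ACP_drt^τ terms t, t', t'', the equation (t ∥ t') ∥ t'' = t ∥ (t' ∥ t'') is derivable from the axioms of ACP_drt^τ (assuming a commutative, associative communication function). -/
import Mathlib

set_option autoImplicit true

/-- Actions extended with the silent action τ and deadlock δ. -/
inductive ATD (A : Type) : Type where
  | act : A → ATD A
  | tau : ATD A
  | delta : ATD A

/-- Terms of ACP_drt^τ with guarded recursion (variables are natural numbers,
a recursive specification is a total function from variables to terms). -/
inductive Tm (A : Type) : Type where
  | und : ATD A → Tm A            -- undelayable action/silent step/deadlock constant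
  | alt : Tm A → Tm A → Tm A      -- alternative composition +
  | seq : Tm A → Tm A → Tm A      -- sequential composition ·
  | delay : Tm A → Tm A           -- one-time-slice delay σ
  | par : Tm A → Tm A → Tm A      -- parallel composition ∥
  | lm : Tm A → Tm A → Tm A       -- left merge ⌊
  | cm : Tm A → Tm A → Tm A       -- communication merge |
  | encap : Set A → Tm A → Tm A   -- encapsulation ∂_H
  | abstr : Set A → Tm A → Tm A   -- abstraction τ_I
  | timeout : Tm A → Tm A         -- current-time-slice time-out ν
  | var : ℕ → Tm A                -- variable
  | recc : (ℕ → Tm A) → ℕ → Tm A   -- recursion constant ⟨X|E⟩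
  | shift : Tm A → Tm A           -- one-time-slice shift ω (auxiliary)
  | tfp : Tm A → Tm A             -- time-free projection π_tf (auxiliary)

namespace Tm
variable {A : Type}

/-- Apply an assignment of terms to variables (leaving recursion constants,
whose variables are bound, untouched). -/
def asg (θ : ℕ → Tm A) : Tm A → Tm A
  | und a => und a
  | alt t u => alt (asg θ t) (asg θ u)
  | seq t u => seq (asg θ t) (asg θ u)
  | delay t => delay (asg θ t)
  | par t u => par (asg θ t) (asg θ u)
  | lm t u => lm (asg θ t) (asg θ u)
  | cm t u => cm (asg θ t) (asg θ u)
  | encap H t => encap H (asg θ t)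
  | abstr I t => abstr I (asg θ t)
  | timeout t => timeout (asg θ t)
  | var X => θ X
  | recc E X => recc E X
  | shift t => shift (asg θ t)
  | tfp t => tfp (asg θ t)

/-- ⟨t|E⟩ : replace each variable Y of t by the recursion constant ⟨Y|E⟩. -/
def sub (E : ℕ → Tm A) (t : Tm A) : Tm A := asg (fun Y => recc E Y) t

/-- n-fold one-time-slice delay σⁿ. -/
def delayN : ℕ → Tm A → Tm A
  | 0, t => t
  | n+1, t => delay (delayN n t)

/-- n-fold one-time-slice shift ωⁿ. -/
def shiftN : ℕ → Tm A → Tm A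
  | 0, t => t
  | n+1, t => shift (shiftN n t)

/-- Syntactically guarded term: no abstraction operator occurs and each variable
occurrence is within a subterm a·t' (a an observable action) or σ(t'). -/
def Guarded : Tm A → Prop
  | und _ => True
  | alt t u => Guarded t ∧ Guarded u
  | seq t u => Guarded t ∧ (Guarded u ∨ ∃ a : A, t = und (ATD.act a))
  | delay _ => True
  | par t u => Guarded t ∧ Guarded u
  | lm t u => Guarded t ∧ Guarded u
  | cm t u => Guarded t ∧ Guarded u
  | encap _ t => Guarded t
  | abstr _ _ => False
  | timeout t => Guarded t
  | var _ => False
  | recc _ _ => True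
  | shift t => Guarded t
  | tfp _ => False

/-- Guarded recursive specification. -/
def GuardedSpec (E : ℕ → Tm A) : Prop := ∀ Y, Guarded (E Y)

/-- No free variables (variables inside recursion constants are bound). -/
def NoFreeVar : Tm A → Prop
  | und _ => True
  | alt t u => NoFreeVar t ∧ NoFreeVar u
  | seq t u => NoFreeVar t ∧ NoFreeVar u
  | delay t => NoFreeVar t
  | par t u => NoFreeVar t ∧ NoFreeVar u
  | lm t u => NoFreeVar t ∧ NoFreeVar u
  | cm t u => NoFreeVar t ∧ NoFreeVar u
  | encap _ t => NoFreeVar t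
  | abstr _ t => NoFreeVar t
  | timeout t => NoFreeVar t
  | var _ => False
  | recc _ _ => True
  | shift t => NoFreeVar t
  | tfp t => NoFreeVar t

/-- Proper ACP_drt^τ+REC term body: the auxiliary operators ω and π_tf do not
occur and all recursive specifications occurring in it are guarded. -/
def PT : Tm A → Prop
  | und _ => True
  | alt t u => PT t ∧ PT u
  | seq t u => PT t ∧ PT u
  | delay t => PT t
  | par t u => PT t ∧ PT u
  | lm t u => PT t ∧ PT u
  | cm t u => PT t ∧ PT u
  | encap _ t => PT t
  | abstr _ t => PT t
  | timeout t => PT t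
  | var _ => True
  | recc E _ => ∀ Y, Guarded (E Y) ∧ PT (E Y)
  | shift _ => False
  | tfp _ => False

/-- Element of 𝒫: closed ACP_drt^τ+REC term. -/
def PTm (t : Tm A) : Prop := PT t ∧ NoFreeVar t

/-- Closed ACP_drt^τ term (recursion-free, no variables, no auxiliary operators). -/
def Plain : Tm A → Prop
  | und _ => True
  | alt t u => Plain t ∧ Plain u
  | seq t u => Plain t ∧ Plain u
  | delay t => Plain t
  | par t u => Plain t ∧ Plain u
  | lm t u => Plain t ∧ Plain u
  | cm t u => Plain t ∧ Plain u
  | encap _ t => Plain t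
  | abstr _ t => Plain t
  | timeout t => Plain t
  | var _ => False
  | recc _ _ => False
  | shift _ => False
  | tfp _ => False

/-- No recursion constant occurs. -/
def RecFree : Tm A → Prop
  | und _ => True
  | alt t u => RecFree t ∧ RecFree u
  | seq t u => RecFree t ∧ RecFree u
  | delay t => RecFree t
  | par t u => RecFree t ∧ RecFree u
  | lm t u => RecFree t ∧ RecFree u
  | cm t u => RecFree t ∧ RecFree u
  | encap _ t => RecFree t
  | abstr _ t => RecFree t
  | timeout t => RecFree t
  | var _ => True
  | recc _ _ => False
  | shift t => RecFree t
  | tfp t => RecFree t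

/-- No abstraction operator occurs. -/
def AbstrFree : Tm A → Prop
  | und _ => True
  | alt t u => AbstrFree t ∧ AbstrFree u
  | seq t u => AbstrFree t ∧ AbstrFree u
  | delay t => AbstrFree t
  | par t u => AbstrFree t ∧ AbstrFree u
  | lm t u => AbstrFree t ∧ AbstrFree u
  | cm t u => AbstrFree t ∧ AbstrFree u
  | encap _ t => AbstrFree t
  | abstr _ _ => False
  | timeout t => AbstrFree t
  | var _ => True
  | recc E _ => ∀ Y, AbstrFree (E Y)
  | shift t => AbstrFree t
  | tfp t => AbstrFree t

/-- Term of BPA_drt^τ+REC: no ∥, ⌊, |, ∂_H and no auxiliary operators. -/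
def BpaP : Tm A → Prop
  | und _ => True
  | alt t u => BpaP t ∧ BpaP u
  | seq t u => BpaP t ∧ BpaP u
  | delay t => BpaP t
  | par _ _ => False
  | lm _ _ => False
  | cm _ _ => False
  | encap _ _ => False
  | abstr _ t => BpaP t
  | timeout t => BpaP t
  | var _ => True
  | recc E _ => ∀ Y, BpaP (E Y)
  | shift _ => False
  | tfp _ => False

/-- The delayable action a = ⟨X | X = \underline{a} + σ(X)⟩. -/
def dact (a : ATD A) : Tm A := recc (fun _ => alt (und a) (delay (var 0))) 0

end Tm

/-- Finite alternative composition (the empty sum is \underline{δ}). -/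
def altList {A : Type} : List (Tm A) → Tm A
  | [] => .und .delta
  | [t] => t
  | t :: ts => .alt t (altList ts)

/-- Finite parallel composition (the empty composition is \underline{δ}). -/
def parList {A : Type} : List (Tm A) → Tm A
  | [] => .und .delta
  | [t] => t
  | t :: ts => .par t (parList ts)

/-- Basic terms over ACP_drt^τ. -/
inductive Basic {A : Type} : Tm A → Prop where
  | und (a : ATD A) : Basic (.und a)
  | pre (a : ATD A) (h : a ≠ ATD.delta) {t : Tm A} : Basic t → Basic (.seq (.und a) t)
  | delay {t : Tm A} : Basic t → Basic (.delay t)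
  | alt {t u : Tm A} : Basic t → Basic u → Basic (.alt t u)

/-- ts-basic terms over ACP_drt^τ. -/
inductive TsBasic {A : Type} : Tm A → Prop where
  | und (a : ATD A) (n : ℕ) : TsBasic (Tm.delayN n (.und a))
  | pre (a : ATD A) (n : ℕ) (h : a ≠ ATD.delta) {t : Tm A} :
      TsBasic t → TsBasic (.seq (Tm.delayN n (.und a)) t)
  | alt {t u : Tm A} : TsBasic t → TsBasic u → TsBasic (.alt t u)

/-- Linear terms. -/
inductive Linear {A : Type} : Tm A → Prop where
  | und (a : ATD A) : Linear (.und a)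
  | pre (a : ATD A) (h : a ≠ ATD.delta) (X : ℕ) : Linear (.seq (.und a) (.var X))
  | delay (X : ℕ) : Linear (.delay (.var X))
  | alt {t u : Tm A} : Linear t → Linear u → Linear (.alt t u)

/-- Derivability in (conditional) equational logic from the axioms of ACP_drt^τ,
optionally (recOK) with the axioms RDP and RSP for guarded recursion, and
optionally with additional axioms Ax. -/
inductive Deriv {A : Type} (γ : ATD A → ATD A → ATD A) (Ax : Tm A → Tm A → Prop)
    (recOK : Bool) : Tm A → Tm A → Prop where
  | refl (t) : Deriv γ Ax recOK t t
  | symm {t u} : Deriv γ Ax recOK t u → Deriv γ Ax recOK u t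
  | trans {t u v} : Deriv γ Ax recOK t u → Deriv γ Ax recOK u v → Deriv γ Ax recOK t v
  | altCongr {t t' u u'} : Deriv γ Ax recOK t t' → Deriv γ Ax recOK u u' →
      Deriv γ Ax recOK (.alt t u) (.alt t' u')
  | seqCongr {t t' u u'} : Deriv γ Ax recOK t t' → Deriv γ Ax recOK u u' →
      Deriv γ Ax recOK (.seq t u) (.seq t' u')
  | delayCongr {t t'} : Deriv γ Ax recOK t t' → Deriv γ Ax recOK (.delay t) (.delay t')
  | parCongr {t t' u u'} : Deriv γ Ax recOK t t' → Deriv γ Ax recOK u u' →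
      Deriv γ Ax recOK (.par t u) (.par t' u')
  | lmCongr {t t' u u'} : Deriv γ Ax recOK t t' → Deriv γ Ax recOK u u' →
      Deriv γ Ax recOK (.lm t u) (.lm t' u')
  | cmCongr {t t' u u'} : Deriv γ Ax recOK t t' → Deriv γ Ax recOK u u' →
      Deriv γ Ax recOK (.cm t u) (.cm t' u')
  | encapCongr (H) {t t'} : Deriv γ Ax recOK t t' →
      Deriv γ Ax recOK (.encap H t) (.encap H t')
  | abstrCongr (I) {t t'} : Deriv γ Ax recOK t t' →
      Deriv γ Ax recOK (.abstr I t) (.abstr I t')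
  | timeoutCongr {t t'} : Deriv γ Ax recOK t t' →
      Deriv γ Ax recOK (.timeout t) (.timeout t')
  | shiftCongr {t t'} : Deriv γ Ax recOK t t' → Deriv γ Ax recOK (.shift t) (.shift t')
  | tfpCongr {t t'} : Deriv γ Ax recOK t t' → Deriv γ Ax recOK (.tfp t) (.tfp t')
  | extra {t u} : Ax t u → Deriv γ Ax recOK t u
  -- A1–A7DR
  | A1 (x y) : Deriv γ Ax recOK (.alt x y) (.alt y x)
  | A2 (x y z) : Deriv γ Ax recOK (.alt (.alt x y) z) (.alt x (.alt y z))
  | A3 (x) : Deriv γ Ax recOK (.alt x x) x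
  | A4 (x y z) : Deriv γ Ax recOK (.seq (.alt x y) z) (.alt (.seq x z) (.seq y z))
  | A5 (x y z) : Deriv γ Ax recOK (.seq (.seq x y) z) (.seq x (.seq y z))
  | A6DR (x) : Deriv γ Ax recOK (.alt x (.und .delta)) x
  | A7DR (x) : Deriv γ Ax recOK (.seq (.und .delta) x) (.und .delta)
  -- DRT1, DRT2
  | DRT1 (x y) : Deriv γ Ax recOK (.alt (.delay x) (.delay y)) (.delay (.alt x y))
  | DRT2 (x y) : Deriv γ Ax recOK (.seq (.delay x) y) (.delay (.seq x y))
  -- encapsulation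
  | D1DR (a : ATD A) (H : Set A) (h : ∀ b, a = ATD.act b → b ∉ H) :
      Deriv γ Ax recOK (.encap H (.und a)) (.und a)
  | D2DR (b : A) (H : Set A) (h : b ∈ H) :
      Deriv γ Ax recOK (.encap H (.und (.act b))) (.und .delta)
  | D3 (H x y) : Deriv γ Ax recOK (.encap H (.alt x y)) (.alt (.encap H x) (.encap H y))
  | D4 (H x y) : Deriv γ Ax recOK (.encap H (.seq x y)) (.seq (.encap H x) (.encap H y))
  | DRD (H x) : Deriv γ Ax recOK (.encap H (.delay x)) (.delay (.encap H x))
  -- abstraction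
  | TI1DR (a : ATD A) (I : Set A) (h : ∀ b, a = ATD.act b → b ∉ I) :
      Deriv γ Ax recOK (.abstr I (.und a)) (.und a)
  | TI2DR (b : A) (I : Set A) (h : b ∈ I) :
      Deriv γ Ax recOK (.abstr I (.und (.act b))) (.und .tau)
  | TI3 (I x y) : Deriv γ Ax recOK (.abstr I (.alt x y)) (.alt (.abstr I x) (.abstr I y))
  | TI4 (I x y) : Deriv γ Ax recOK (.abstr I (.seq x y)) (.seq (.abstr I x) (.abstr I y))
  | DRTI (I x) : Deriv γ Ax recOK (.abstr I (.delay x)) (.delay (.abstr I x))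
  -- merge
  | CM1 (x y) : Deriv γ Ax recOK (.par x y) (.alt (.alt (.lm x y) (.lm y x)) (.cm x y))
  | CM2DR (a : ATD A) (x) : Deriv γ Ax recOK (.lm (.und a) x) (.seq (.und a) x)
  | CM3DR (a : ATD A) (x y) :
      Deriv γ Ax recOK (.lm (.seq (.und a) x) y) (.seq (.und a) (.par x y))
  | DRCM1 (x y) : Deriv γ Ax recOK (.lm (.delay x) (.timeout y)) (.und .delta)
  | DRCM2 (x y z) : Deriv γ Ax recOK (.lm (.delay x) (.alt (.timeout y) (.delay z)))
      (.delay (.lm x z))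
  | CM4 (x y z) : Deriv γ Ax recOK (.lm (.alt x y) z) (.alt (.lm x z) (.lm y z))
  | CM5DR (a b : ATD A) (x) : Deriv γ Ax recOK (.cm (.seq (.und a) x) (.und b))
      (.seq (.cm (.und a) (.und b)) x)
  | CM6DR (a b : ATD A) (x) : Deriv γ Ax recOK (.cm (.und a) (.seq (.und b) x))
      (.seq (.cm (.und a) (.und b)) x)
  | CM7DR (a b : ATD A) (x y) : Deriv γ Ax recOK (.cm (.seq (.und a) x) (.seq (.und b) y))
      (.seq (.cm (.und a) (.und b)) (.par x y))
  | DRCM3 (x y) : Deriv γ Ax recOK (.cm (.timeout x) (.delay y)) (.und .delta)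
  | DRCM4 (x y) : Deriv γ Ax recOK (.cm (.delay x) (.timeout y)) (.und .delta)
  | DRCM5 (x y) : Deriv γ Ax recOK (.cm (.delay x) (.delay y)) (.delay (.cm x y))
  | CM8 (x y z) : Deriv γ Ax recOK (.cm (.alt x y) z) (.alt (.cm x z) (.cm y z))
  | CM9 (x y z) : Deriv γ Ax recOK (.cm x (.alt y z)) (.alt (.cm x y) (.cm x z))
  | CFDR (a b : ATD A) : Deriv γ Ax recOK (.cm (.und a) (.und b)) (.und (γ a b))
  -- time-out
  | DRTO1 (a : ATD A) : Deriv γ Ax recOK (.timeout (.und a)) (.und a)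
  | DRTO2 (x y) : Deriv γ Ax recOK (.timeout (.alt x y)) (.alt (.timeout x) (.timeout y))
  | DRTO3 (x y) : Deriv γ Ax recOK (.timeout (.seq x y)) (.seq (.timeout x) y)
  | DRTO4 (x) : Deriv γ Ax recOK (.timeout (.delay x)) (.und .delta)
  -- silent step
  | DRB1 (a : ATD A) : Deriv γ Ax recOK (.seq (.und a) (.und .tau)) (.und a)
  | DRB2 (a : ATD A) (x y) : Deriv γ Ax recOK
      (.seq (.und a) (.alt (.seq (.und .tau) (.alt (.timeout x) y)) (.timeout x)))
      (.seq (.und a) (.alt (.timeout x) y))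
  | DRB3 (a : ATD A) (x y) : Deriv γ Ax recOK
      (.seq (.und a) (.alt (.seq (.und .tau) (.alt (.timeout x) y)) y))
      (.seq (.und a) (.alt (.timeout x) y))
  | DRB4 (a : ATD A) (x y) : Deriv γ Ax recOK
      (.seq (.und a) (.alt (.delay (.seq (.und .tau) x)) (.timeout y)))
      (.seq (.und a) (.alt (.delay x) (.timeout y)))
  -- recursion
  | RDP (E : ℕ → Tm A) (X : ℕ) (hrec : recOK = true) (hg : Tm.GuardedSpec E) :
      Deriv γ Ax recOK (.recc E X) (Tm.sub E (E X))
  | RSP (E : ℕ → Tm A) (θ : ℕ → Tm A) (X : ℕ) (hrec : recOK = true)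
      (hg : Tm.GuardedSpec E) (h : ∀ Y, Deriv γ Ax recOK (θ Y) (Tm.asg θ (E Y))) :
      Deriv γ Ax recOK (θ X) (.recc E X)

/-- The empty set of additional axioms. -/
def NoAx {A : Type} : Tm A → Tm A → Prop := fun _ _ => False

/-! ### Two-phase structural operational semantics -/

/-- Map a transition label (A ∪ {τ}, with `none` = τ) into A ∪ {τ,δ}. -/
def toATD {A : Type} : Option A → ATD A
  | some a => ATD.act a
  | none => ATD.tau

/-- Combination of the residues of two synchronously performed actions
(`none` stands for successful termination √). -/
def parOpt {A : Type} : Option (Tm A) → Option (Tm A) → Option (Tm A)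
  | some x, some y => some (.par x y)
  | some x, none => some x
  | none, some y => some y
  | none, none => none

/-- Capability of idling till the next time slice. -/
inductive CanIdle {A : Type} : Tm A → Prop where
  | delay (t : Tm A) : CanIdle (.delay t)
  | altL {t u : Tm A} : CanIdle t → CanIdle (.alt t u)
  | altR {t u : Tm A} : CanIdle u → CanIdle (.alt t u)
  | seq {t : Tm A} (u : Tm A) : CanIdle t → CanIdle (.seq t u)
  | par {t u : Tm A} : CanIdle t → CanIdle u → CanIdle (.par t u)
  | lm {t u : Tm A} : CanIdle t → CanIdle u → CanIdle (.lm t u)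
  | cm {t u : Tm A} : CanIdle t → CanIdle u → CanIdle (.cm t u)
  | encap (H : Set A) {t : Tm A} : CanIdle t → CanIdle (.encap H t)
  | abstr (I : Set A) {t : Tm A} : CanIdle t → CanIdle (.abstr I t)
  | recc {E : ℕ → Tm A} {X : ℕ} : Tm.GuardedSpec E →
      CanIdle (Tm.sub E (E X)) → CanIdle (.recc E X)

/-- σ-transitions of the two-phase semantics (Table 3). -/
inductive SStep {A : Type} : Tm A → Tm A → Prop where
  | delay (t : Tm A) : SStep (.delay t) t
  | altL {t t' u : Tm A} : SStep t t' → ¬ CanIdle u → SStep (.alt t u) t'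
  | altR {t u u' : Tm A} : ¬ CanIdle t → SStep u u' → SStep (.alt t u) u'
  | altB {t t' u u' : Tm A} : SStep t t' → SStep u u' → SStep (.alt t u) (.alt t' u')
  | seq {t t' : Tm A} (u : Tm A) : SStep t t' → SStep (.seq t u) (.seq t' u)
  | par {t t' u u' : Tm A} : SStep t t' → SStep u u' → SStep (.par t u) (.par t' u')
  | lm {t t' u u' : Tm A} : SStep t t' → SStep u u' → SStep (.lm t u) (.lm t' u')
  | cm {t t' u u' : Tm A} : SStep t t' → SStep u u' → SStep (.cm t u) (.cm t' u')
  | encap (H : Set A) {t t' : Tm A} : SStep t t' → SStep (.encap H t) (.encap H t')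
  | abstr (I : Set A) {t t' : Tm A} : SStep t t' → SStep (.abstr I t) (.abstr I t')
  | recc {E : ℕ → Tm A} {X : ℕ} {t' : Tm A} : Tm.GuardedSpec E →
      SStep (Tm.sub E (E X)) t' → SStep (.recc E X) t'

/-- Action transitions of the two-phase semantics (Table 3); the label `none`
is the silent step τ and the target `none` is successful termination √. -/
inductive AStep {A : Type} (γ : ATD A → ATD A → ATD A) :
    Tm A → Option A → Option (Tm A) → Prop where
  | act (a : A) : AStep γ (.und (.act a)) (some a) none
  | tau : AStep γ (.und .tau) none none
  | altL {t u ℓ o} : AStep γ t ℓ o → AStep γ (.alt t u) ℓ o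
  | altR {t u ℓ o} : AStep γ u ℓ o → AStep γ (.alt t u) ℓ o
  | seqStep {t t' u ℓ} : AStep γ t ℓ (some t') → AStep γ (.seq t u) ℓ (some (.seq t' u))
  | seqTerm {t u ℓ} : AStep γ t ℓ none → AStep γ (.seq t u) ℓ (some u)
  | parL {t t' u ℓ} : AStep γ t ℓ (some t') → AStep γ (.par t u) ℓ (some (.par t' u))
  | parR {t u u' ℓ} : AStep γ u ℓ (some u') → AStep γ (.par t u) ℓ (some (.par t u'))
  | parLT {t u ℓ} : AStep γ t ℓ none → AStep γ (.par t u) ℓ (some u)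
  | parRT {t u ℓ} : AStep γ u ℓ none → AStep γ (.par t u) ℓ (some t)
  | parC {t u ℓ₁ ℓ₂ ℓ o₁ o₂} : AStep γ t ℓ₁ o₁ → AStep γ u ℓ₂ o₂ →
      γ (toATD ℓ₁) (toATD ℓ₂) = toATD ℓ → AStep γ (.par t u) ℓ (parOpt o₁ o₂)
  | lmStep {t t' u ℓ} : AStep γ t ℓ (some t') → AStep γ (.lm t u) ℓ (some (.par t' u))
  | lmTerm {t u ℓ} : AStep γ t ℓ none → AStep γ (.lm t u) ℓ (some u)
  | cmC {t u ℓ₁ ℓ₂ ℓ o₁ o₂} : AStep γ t ℓ₁ o₁ → AStep γ u ℓ₂ o₂ →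
      γ (toATD ℓ₁) (toATD ℓ₂) = toATD ℓ → AStep γ (.cm t u) ℓ (parOpt o₁ o₂)
  | encap (H : Set A) {t ℓ o} : AStep γ t ℓ o → (∀ b, ℓ = some b → b ∉ H) →
      AStep γ (.encap H t) ℓ (Option.map (Tm.encap H) o)
  | abstrKeep (I : Set A) {t ℓ o} : AStep γ t ℓ o → (∀ b, ℓ = some b → b ∉ I) →
      AStep γ (.abstr I t) ℓ (Option.map (Tm.abstr I) o)
  | abstrHide (I : Set A) {t b o} : AStep γ t (some b) o → b ∈ I →
      AStep γ (.abstr I t) none (Option.map (Tm.abstr I) o)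
  | timeout {t ℓ o} : AStep γ t ℓ o → AStep γ (.timeout t) ℓ o
  | recc {E X ℓ o} : Tm.GuardedSpec E → AStep γ (Tm.sub E (E X)) ℓ o →
      AStep γ (.recc E X) ℓ o

/-- Labels of the two-phase semantics: A ∪ {τ} ∪ {σ}. -/
inductive L2 (A : Type) where
  | act : A → L2 A
  | tau : L2 A
  | sig : L2 A

/-- Combined transition relation of the two-phase semantics. -/
def Step {A : Type} (γ : ATD A → ATD A → ATD A) (t : Tm A) :
    L2 A → Option (Tm A) → Prop
  | .act a, o => AStep γ t (some a) o
  | .tau, o => AStep γ t none o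
  | .sig, o => ∃ t', o = some t' ∧ SStep t t'

/-- A silent path t₂ = t*₀ →τ t*₁ →τ ⋯ →τ t*ₙ with R(t₁, t*ᵢ₊₁) at every step. -/
inductive TauSeq {A : Type} (γ : ATD A → ATD A → ATD A)
    (R : Option (Tm A) → Option (Tm A) → Prop) (t1 t2 : Tm A) : Tm A → Prop where
  | refl : TauSeq γ R t1 t2 t2
  | step {u v : Tm A} : TauSeq γ R t1 t2 u → AStep γ u none (some v) →
      R (some t1) (some v) → TauSeq γ R t1 t2 v

/-- Branching bisimulation on the two-phase semantics. -/
def IsBB {A : Type} (γ : ATD A → ATD A → ATD A)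
    (R : Option (Tm A) → Option (Tm A) → Prop) : Prop :=
  ∀ t1 t2, R (some t1) (some t2) →
    (∀ ℓ o1, Step γ t1 ℓ o1 →
      (ℓ = L2.tau ∧ R o1 (some t2)) ∨
      ∃ u o2, TauSeq γ R t1 t2 u ∧ Step γ u ℓ o2 ∧ R o1 o2) ∧
    (∀ ℓ o2, Step γ t2 ℓ o2 →
      (ℓ = L2.tau ∧ R (some t1) o2) ∨
      ∃ u o1, TauSeq γ (fun p q => R q p) t2 t1 u ∧ Step γ u ℓ o1 ∧ R o1 o2)

/-- Branching bisimilarity ↔_b on the two-phase semantics. -/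
def BBisim {A : Type} (γ : ATD A → ATD A → ATD A) (t1 t2 : Tm A) : Prop :=
  ∃ R, IsBB γ R ∧ R (some t1) (some t2)

/-- The root condition of a pair in a relation (two-phase semantics). -/
def RootCond {A : Type} (γ : ATD A → ATD A → ATD A)
    (R : Option (Tm A) → Option (Tm A) → Prop) (t1 t2 : Tm A) : Prop :=
  (∀ ℓ o1, Step γ t1 ℓ o1 → ∃ o2, Step γ t2 ℓ o2 ∧ R o1 o2) ∧
  (∀ ℓ o2, Step γ t2 ℓ o2 → ∃ o1, Step γ t1 ℓ o1 ∧ R o1 o2)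

/-- Reachability by idling only. -/
def Midling {A : Type} : Tm A → Tm A → Prop := Relation.ReflTransGen SStep

/-- Rooted branching bisimilarity ↔_rb on the two-phase semantics. -/
def RootedBB {A : Type} (γ : ATD A → ATD A → ATD A) (t1 t2 : Tm A) : Prop :=
  ∃ R, IsBB γ R ∧ R (some t1) (some t2) ∧
    ∀ t1' t2', Midling t1 t1' → Midling t2 t2' → R (some t1') (some t2') →
      RootCond γ R t1' t2'

/-! ### Time-stamped structural operational semantics -/

/-- Idling relation of the time-stamped semantics: t ⇑ n. -/
inductive Idles {A : Type} : Tm A → ℕ → Prop where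
  | zero (t : Tm A) : Idles t 0
  | altL {t u n} : Idles t n → Idles (.alt t u) n
  | altR {t u n} : Idles u n → Idles (.alt t u) n
  | seq {t n} (u : Tm A) : Idles t n → Idles (.seq t u) n
  | delay {t n} : Idles t n → Idles (.delay t) (n+1)
  | par {t u n} : Idles t n → Idles u n → Idles (.par t u) n
  | lm {t u n} : Idles t n → Idles u n → Idles (.lm t u) n
  | cm {t u n} : Idles t n → Idles u n → Idles (.cm t u) n
  | encap (H : Set A) {t n} : Idles t n → Idles (.encap H t) n
  | abstr (I : Set A) {t n} : Idles t n → Idles (.abstr I t) n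
  | recc {E X n} : Tm.GuardedSpec E → Idles (Tm.sub E (E X)) n → Idles (.recc E X) n
  | shift {t n} : Idles t (n+1) → Idles (.shift t) n

/-- Time-stamped transitions t →^{a[n]} t' (Table 6); the label `none` is τ and
the target `none` is successful termination √. -/
inductive TStep {A : Type} (γ : ATD A → ATD A → ATD A) :
    Tm A → Option A → ℕ → Option (Tm A) → Prop where
  | act (a : A) : TStep γ (.und (.act a)) (some a) 0 none
  | tau : TStep γ (.und .tau) none 0 none
  | altL {t u ℓ n o} : TStep γ t ℓ n o → TStep γ (.alt t u) ℓ n o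
  | altR {t u ℓ n o} : TStep γ u ℓ n o → TStep γ (.alt t u) ℓ n o
  | seqStep {t t' u ℓ n} : TStep γ t ℓ n (some t') →
      TStep γ (.seq t u) ℓ n (some (.seq t' u))
  | seqTerm {t u ℓ n} : TStep γ t ℓ n none → TStep γ (.seq t u) ℓ n (some u)
  | delay {t ℓ n o} : TStep γ t ℓ n o → TStep γ (.delay t) ℓ (n+1) o
  | parL {t t' u ℓ n} : TStep γ t ℓ n (some t') → Idles u n →
      TStep γ (.par t u) ℓ n (some (.par t' (Tm.shiftN n u)))
  | parR {t u u' ℓ n} : Idles t n → TStep γ u ℓ n (some u') →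
      TStep γ (.par t u) ℓ n (some (.par (Tm.shiftN n t) u'))
  | parLT {t u ℓ n} : TStep γ t ℓ n none → Idles u n →
      TStep γ (.par t u) ℓ n (some (Tm.shiftN n u))
  | parRT {t u ℓ n} : Idles t n → TStep γ u ℓ n none →
      TStep γ (.par t u) ℓ n (some (Tm.shiftN n t))
  | parC {t u ℓ₁ ℓ₂ ℓ n o₁ o₂} : TStep γ t ℓ₁ n o₁ → TStep γ u ℓ₂ n o₂ →
      γ (toATD ℓ₁) (toATD ℓ₂) = toATD ℓ → TStep γ (.par t u) ℓ n (parOpt o₁ o₂)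
  | lmStep {t t' u ℓ n} : TStep γ t ℓ n (some t') → Idles u n →
      TStep γ (.lm t u) ℓ n (some (.par t' (Tm.shiftN n u)))
  | lmTerm {t u ℓ n} : TStep γ t ℓ n none → Idles u n →
      TStep γ (.lm t u) ℓ n (some (Tm.shiftN n u))
  | cmC {t u ℓ₁ ℓ₂ ℓ n o₁ o₂} : TStep γ t ℓ₁ n o₁ → TStep γ u ℓ₂ n o₂ →
      γ (toATD ℓ₁) (toATD ℓ₂) = toATD ℓ → TStep γ (.cm t u) ℓ n (parOpt o₁ o₂)
  | encap (H : Set A) {t ℓ n o} : TStep γ t ℓ n o → (∀ b, ℓ = some b → b ∉ H) →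
      TStep γ (.encap H t) ℓ n (Option.map (Tm.encap H) o)
  | abstrKeep (I : Set A) {t ℓ n o} : TStep γ t ℓ n o → (∀ b, ℓ = some b → b ∉ I) →
      TStep γ (.abstr I t) ℓ n (Option.map (Tm.abstr I) o)
  | abstrHide (I : Set A) {t b n o} : TStep γ t (some b) n o → b ∈ I →
      TStep γ (.abstr I t) none n (Option.map (Tm.abstr I) o)
  | timeout {t ℓ o} : TStep γ t ℓ 0 o → TStep γ (.timeout t) ℓ 0 o
  | recc {E X ℓ n o} : Tm.GuardedSpec E → TStep γ (Tm.sub E (E X)) ℓ n o →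
      TStep γ (.recc E X) ℓ n o
  | shift {t ℓ n o} : TStep γ t ℓ (n+1) o → TStep γ (.shift t) ℓ n o

/-- A time-stamped silent path from t₂ with accumulated duration, relating the
appropriately shifted t₁ with every intermediate state. -/
inductive TsSeq {A : Type} (γ : ATD A → ATD A → ATD A)
    (R : Option (Tm A) → Option (Tm A) → Prop) (t1 t2 : Tm A) : ℕ → Tm A → Prop where
  | refl : TsSeq γ R t1 t2 0 t2
  | step {k u nk v} : TsSeq γ R t1 t2 k u → TStep γ u none nk (some v) →
      R (some (Tm.shiftN (k+nk) t1)) (some v) → TsSeq γ R t1 t2 (k+nk) v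

/-- ts-branching bisimulation. -/
def IsTsBB {A : Type} (γ : ATD A → ATD A → ATD A)
    (R : Option (Tm A) → Option (Tm A) → Prop) : Prop :=
  ∀ t1 t2, R (some t1) (some t2) →
    (∀ ℓ n o1, TStep γ t1 ℓ n o1 →
      (ℓ = none ∧ R o1 (some (Tm.shiftN n t2))) ∨
      ∃ k u nm o2, TsSeq γ R t1 t2 k u ∧ TStep γ u ℓ nm o2 ∧ k + nm = n ∧ R o1 o2) ∧
    (∀ ℓ n o2, TStep γ t2 ℓ n o2 →
      (ℓ = none ∧ R (some (Tm.shiftN n t1)) o2) ∨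
      ∃ k u nm o1, TsSeq γ (fun p q => R q p) t2 t1 k u ∧ TStep γ u ℓ nm o1 ∧
        k + nm = n ∧ R o1 o2) ∧
    (∀ n, Idles t1 n ↔ Idles t2 n)

/-- The ts-root condition of a pair in a relation. -/
def TsRootCond {A : Type} (γ : ATD A → ATD A → ATD A)
    (R : Option (Tm A) → Option (Tm A) → Prop) (t1 t2 : Tm A) : Prop :=
  (∀ ℓ n o1, TStep γ t1 ℓ n o1 → ∃ o2, TStep γ t2 ℓ n o2 ∧ R o1 o2) ∧
  (∀ ℓ n o2, TStep γ t2 ℓ n o2 → ∃ o1, TStep γ t1 ℓ n o1 ∧ R o1 o2)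

/-- Rooted ts-branching bisimilarity ↔'_rb. -/
def RootedTsBB {A : Type} (γ : ATD A → ATD A → ATD A) (t1 t2 : Tm A) : Prop :=
  ∃ R, IsTsBB γ R ∧ R (some t1) (some t2) ∧ TsRootCond γ R t1 t2

/-- Activeness: the capability of performing an action in the current time
slice, possibly after some silent steps in the current time slice. -/
inductive Active {A : Type} (γ : ATD A → ATD A → ATD A) : Tm A → Prop where
  | obs {t : Tm A} {a : A} {t' : Tm A} : TStep γ t (some a) 0 (some t') → Active γ t
  | term {t : Tm A} {ℓ : Option A} : TStep γ t ℓ 0 none → Active γ t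
  | tauStep {t t' : Tm A} : TStep γ t none 0 (some t') → Active γ t' → Active γ t

/-- Activeness extended to 𝒫 ∪ {√} (√ is not active). -/
def ActiveO {A : Type} (γ : ATD A → ATD A → ATD A) : Option (Tm A) → Prop
  | some t => Active γ t
  | none => False

/-- A time-stamped silent path for dormancy-aware branching bisimulations:
relatedness of an intermediate state is only required when it is active. -/
inductive DaSeq {A : Type} (γ : ATD A → ATD A → ATD A)
    (R : Option (Tm A) → Option (Tm A) → Prop) (t1 t2 : Tm A) : ℕ → Tm A → Prop where
  | refl : DaSeq γ R t1 t2 0 t2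
  | step {k u nk v} : DaSeq γ R t1 t2 k u → TStep γ u none nk (some v) →
      (Active γ v → R (some (Tm.shiftN (k+nk) t1)) (some v)) → DaSeq γ R t1 t2 (k+nk) v

/-- Dormancy-aware branching bisimulation. -/
def IsDaBB {A : Type} (γ : ATD A → ATD A → ATD A)
    (R : Option (Tm A) → Option (Tm A) → Prop) : Prop :=
  ∀ t1 t2, R (some t1) (some t2) →
    (∀ ℓ n o1, TStep γ t1 ℓ n o1 →
      (ℓ = none ∧ (ActiveO γ o1 → R o1 (some (Tm.shiftN n t2)))) ∨
      ∃ k u nm o2, DaSeq γ R t1 t2 k u ∧ TStep γ u ℓ nm o2 ∧ k + nm = n ∧ R o1 o2) ∧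
    (∀ ℓ n o2, TStep γ t2 ℓ n o2 →
      (ℓ = none ∧ (ActiveO γ o2 → R (some (Tm.shiftN n t1)) o2)) ∨
      ∃ k u nm o1, DaSeq γ (fun p q => R q p) t2 t1 k u ∧ TStep γ u ℓ nm o1 ∧
        k + nm = n ∧ R o1 o2) ∧
    (∀ n, Idles t1 n ↔ Idles t2 n)

/-- Rooted dormancy-aware branching bisimilarity ⇄_rb. -/
def RootedDaBB {A : Type} (γ : ATD A → ATD A → ATD A) (t1 t2 : Tm A) : Prop :=
  ∃ R, IsDaBB γ R ∧ R (some t1) (some t2) ∧ TsRootCond γ R t1 t2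

/-- n-fold σ-step sequences in the two-phase semantics. -/
def SSeq {A : Type} : ℕ → Tm A → Tm A → Prop
  | 0, t, t' => t' = t
  | n+1, t, t' => ∃ u, SStep t u ∧ SSeq n u t'

/-- The axioms of standard concurrency together with the handshaking axiom. -/
inductive SCAx {A : Type} : Tm A → Tm A → Prop where
  | parComm (x y : Tm A) : SCAx (.par x y) (.par y x)
  | parAssoc (x y z : Tm A) : SCAx (.par (.par x y) z) (.par x (.par y z))
  | lmAssoc (x y z : Tm A) : SCAx (.lm (.lm x y) z) (.lm x (.par y z))
  | cmComm (x y : Tm A) : SCAx (.cm x y) (.cm y x)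
  | cmAssoc (x y z : Tm A) : SCAx (.cm (.cm x y) z) (.cm x (.cm y z))
  | cmLm (x y z : Tm A) : SCAx (.cm x (.lm y z)) (.lm (.cm x y) z)
  | handshaking (x y z : Tm A) : SCAx (.timeout (.cm (.cm x y) z)) (.und .delta)

/-- The defining axioms of the time-free projection operator π_tf. -/
inductive TFPAx {A : Type} : Tm A → Tm A → Prop where
  | DRTFP1 (a : ATD A) : TFPAx (.tfp (.und a)) (Tm.dact a)
  | DRTFP2 (x y : Tm A) : TFPAx (.tfp (.alt x y)) (.alt (.tfp x) (.tfp y))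
  | DRTFP3 (x y : Tm A) : TFPAx (.tfp (.seq x y)) (.seq (.tfp x) (.tfp y))
  | DRTFP4 (x : Tm A) : TFPAx (.tfp (.delay x)) (.tfp x)

/-! ### The untimed theory ACP^τ+REC -/

/-- Terms of untimed ACP^τ with guarded recursion. -/
inductive UTm (A : Type) : Type where
  | c : ATD A → UTm A
  | alt : UTm A → UTm A → UTm A
  | seq : UTm A → UTm A → UTm A
  | par : UTm A → UTm A → UTm A
  | lm : UTm A → UTm A → UTm A
  | cm : UTm A → UTm A → UTm A
  | encap : Set A → UTm A → UTm A
  | abstr : Set A → UTm A → UTm A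
  | var : ℕ → UTm A
  | recc : (ℕ → UTm A) → ℕ → UTm A

namespace UTm
variable {A : Type}

def asg (θ : ℕ → UTm A) : UTm A → UTm A
  | c a => c a
  | alt t u => alt (asg θ t) (asg θ u)
  | seq t u => seq (asg θ t) (asg θ u)
  | par t u => par (asg θ t) (asg θ u)
  | lm t u => lm (asg θ t) (asg θ u)
  | cm t u => cm (asg θ t) (asg θ u)
  | encap H t => encap H (asg θ t)
  | abstr I t => abstr I (asg θ t)
  | var X => θ X
  | recc E X => recc E X

def sub (E : ℕ → UTm A) (t : UTm A) : UTm A := asg (fun Y => recc E Y) t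

def Guarded : UTm A → Prop
  | c _ => True
  | alt t u => Guarded t ∧ Guarded u
  | seq t u => Guarded t ∧ (Guarded u ∨ ∃ a : A, t = c (ATD.act a))
  | par t u => Guarded t ∧ Guarded u
  | lm t u => Guarded t ∧ Guarded u
  | cm t u => Guarded t ∧ Guarded u
  | encap _ t => Guarded t
  | abstr _ _ => False
  | var _ => False
  | recc _ _ => True

def GuardedSpec (E : ℕ → UTm A) : Prop := ∀ Y, Guarded (E Y)

/-- Closed untimed term. -/
def Closed : UTm A → Prop
  | c _ => True
  | alt t u => Closed t ∧ Closed u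
  | seq t u => Closed t ∧ Closed u
  | par t u => Closed t ∧ Closed u
  | lm t u => Closed t ∧ Closed u
  | cm t u => Closed t ∧ Closed u
  | encap _ t => Closed t
  | abstr _ t => Closed t
  | var _ => False
  | recc _ _ => True

end UTm

/-- Derivability from the axioms of untimed ACP^τ+REC (with the branching
silent-step axioms B1 and B2 and with RDP and RSP). -/
inductive UDeriv {A : Type} (γ : ATD A → ATD A → ATD A) : UTm A → UTm A → Prop where
  | refl (t) : UDeriv γ t t
  | symm {t u} : UDeriv γ t u → UDeriv γ u t
  | trans {t u v} : UDeriv γ t u → UDeriv γ u v → UDeriv γ t v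
  | altCongr {t t' u u'} : UDeriv γ t t' → UDeriv γ u u' → UDeriv γ (.alt t u) (.alt t' u')
  | seqCongr {t t' u u'} : UDeriv γ t t' → UDeriv γ u u' → UDeriv γ (.seq t u) (.seq t' u')
  | parCongr {t t' u u'} : UDeriv γ t t' → UDeriv γ u u' → UDeriv γ (.par t u) (.par t' u')
  | lmCongr {t t' u u'} : UDeriv γ t t' → UDeriv γ u u' → UDeriv γ (.lm t u) (.lm t' u')
  | cmCongr {t t' u u'} : UDeriv γ t t' → UDeriv γ u u' → UDeriv γ (.cm t u) (.cm t' u')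
  | encapCongr (H) {t t'} : UDeriv γ t t' → UDeriv γ (.encap H t) (.encap H t')
  | abstrCongr (I) {t t'} : UDeriv γ t t' → UDeriv γ (.abstr I t) (.abstr I t')
  | A1 (x y) : UDeriv γ (.alt x y) (.alt y x)
  | A2 (x y z) : UDeriv γ (.alt (.alt x y) z) (.alt x (.alt y z))
  | A3 (x) : UDeriv γ (.alt x x) x
  | A4 (x y z) : UDeriv γ (.seq (.alt x y) z) (.alt (.seq x z) (.seq y z))
  | A5 (x y z) : UDeriv γ (.seq (.seq x y) z) (.seq x (.seq y z))
  | A6 (x) : UDeriv γ (.alt x (.c .delta)) x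
  | A7 (x) : UDeriv γ (.seq (.c .delta) x) (.c .delta)
  | D1 (a : ATD A) (H : Set A) (h : ∀ b, a = ATD.act b → b ∉ H) :
      UDeriv γ (.encap H (.c a)) (.c a)
  | D2 (b : A) (H : Set A) (h : b ∈ H) : UDeriv γ (.encap H (.c (.act b))) (.c .delta)
  | D3 (H x y) : UDeriv γ (.encap H (.alt x y)) (.alt (.encap H x) (.encap H y))
  | D4 (H x y) : UDeriv γ (.encap H (.seq x y)) (.seq (.encap H x) (.encap H y))
  | TI1 (a : ATD A) (I : Set A) (h : ∀ b, a = ATD.act b → b ∉ I) :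
      UDeriv γ (.abstr I (.c a)) (.c a)
  | TI2 (b : A) (I : Set A) (h : b ∈ I) : UDeriv γ (.abstr I (.c (.act b))) (.c .tau)
  | TI3 (I x y) : UDeriv γ (.abstr I (.alt x y)) (.alt (.abstr I x) (.abstr I y))
  | TI4 (I x y) : UDeriv γ (.abstr I (.seq x y)) (.seq (.abstr I x) (.abstr I y))
  | CM1 (x y) : UDeriv γ (.par x y) (.alt (.alt (.lm x y) (.lm y x)) (.cm x y))
  | CM2 (a : ATD A) (x) : UDeriv γ (.lm (.c a) x) (.seq (.c a) x)
  | CM3 (a : ATD A) (x y) : UDeriv γ (.lm (.seq (.c a) x) y) (.seq (.c a) (.par x y))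
  | CM4 (x y z) : UDeriv γ (.lm (.alt x y) z) (.alt (.lm x z) (.lm y z))
  | CM5 (a b : ATD A) (x) : UDeriv γ (.cm (.seq (.c a) x) (.c b)) (.seq (.cm (.c a) (.c b)) x)
  | CM6 (a b : ATD A) (x) : UDeriv γ (.cm (.c a) (.seq (.c b) x)) (.seq (.cm (.c a) (.c b)) x)
  | CM7 (a b : ATD A) (x y) :
      UDeriv γ (.cm (.seq (.c a) x) (.seq (.c b) y)) (.seq (.cm (.c a) (.c b)) (.par x y))
  | CM8 (x y z) : UDeriv γ (.cm (.alt x y) z) (.alt (.cm x z) (.cm y z))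
  | CM9 (x y z) : UDeriv γ (.cm x (.alt y z)) (.alt (.cm x y) (.cm x z))
  | CF (a b : ATD A) : UDeriv γ (.cm (.c a) (.c b)) (.c (γ a b))
  | B1 (x) : UDeriv γ (.seq x (.c .tau)) x
  | B2 (x y z) : UDeriv γ (.seq x (.alt (.seq (.c .tau) (.alt y z)) z)) (.seq x (.alt y z))
  | RDP (E : ℕ → UTm A) (X : ℕ) (hg : UTm.GuardedSpec E) :
      UDeriv γ (.recc E X) (UTm.sub E (E X))
  | RSP (E : ℕ → UTm A) (θ : ℕ → UTm A) (X : ℕ) (hg : UTm.GuardedSpec E)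
      (h : ∀ Y, UDeriv γ (θ Y) (UTm.asg θ (E Y))) : UDeriv γ (θ X) (.recc E X)

/-- The embedding ε of untimed ACP^τ+REC terms into ACP_drt^τ+REC, replacing
each action constant a by the delayable action ⟨X | X = \underline{a} + σ(X)⟩. -/
def eps {A : Type} : UTm A → Tm A
  | .c a => Tm.dact a
  | .alt t u => .alt (eps t) (eps u)
  | .seq t u => .seq (eps t) (eps u)
  | .par t u => .par (eps t) (eps u)
  | .lm t u => .lm (eps t) (eps u)
  | .cm t u => .cm (eps t) (eps u)
  | .encap H t => .encap H (eps t)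
  | .abstr I t => .abstr I (eps t)
  | .var X => .var X
  | .recc E X => .recc (fun Y => eps (E Y)) X

namespace PAssoc
inductive B (A : Type) : Type where
  | und : ATD A → B A
  | pre : ATD A → B A → B A
  | delay : B A → B A
  | alt : B A → B A → B A

namespace B

def size : B A → ℕ
  | .und _ => 1
  | .pre _ t => t.size + 1
  | .delay t => t.size + 1
  | .alt t u => t.size + u.size + 1

lemma size_pos (t : B A) : 0 < t.size := by cases t <;> simp [size]

def interp : B A → Tm A
  | .und a => .und a
  | .pre a t => .seq (.und a) t.interp
  | .delay t => .delay t.interp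
  | .alt t u => .alt t.interp u.interp

def dmerge : Option (B A) → Option (B A) → Option (B A)
  | some w, some v => some (.alt w v)
  | some w, none => some w
  | none, o => o

def dpart : B A → Option (B A)
  | .und _ => none
  | .pre _ _ => none
  | .delay t => some t
  | .alt t u => dmerge t.dpart u.dpart

lemma dpart_size : ∀ {y w : B A}, y.dpart = some w → w.size < y.size := by
  intro y
  induction y with
  | und a => intro w h; simp [dpart] at h
  | pre a t ih => intro w h; simp [dpart] at h
  | delay t ih => intro w h; simp [dpart] at h; subst h; simp [size]
  | alt t u iht ihu =>
      intro w h
      simp only [dpart] at h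
      rcases ht : t.dpart with _ | wt <;> rcases hu : u.dpart with _ | wu <;>
        rw [ht, hu] at h <;> simp [dmerge] at h
      · subst h; have := ihu hu; simp [size]; omega
      · subst h; have := iht ht; simp [size]; omega
      · subst h; have h1 := iht ht; have h2 := ihu hu; simp [size]; omega

variable (γ : ATD A → ATD A → ATD A)

mutual
def blm : B A → B A → B A
  | .und a, y => .pre a y
  | .pre a t, y => .pre a (.alt (.alt (blm t y) (blm y t)) (bcm t y))
  | .alt x1 x2, y => .alt (blm x1 y) (blm x2 y)
  | .delay t, y =>
      match hv : y.dpart with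
      | none => .und .delta
      | some v => .delay (blm t v)
termination_by x y => x.size + y.size
decreasing_by
  all_goals simp [size] <;> first
    | omega
    | (have := dpart_size hv; have := size_pos t; omega)
    | (have := size_pos y1; have := size_pos y2; omega)
    | (have := size_pos x1; have := size_pos x2; omega)

def bcm : B A → B A → B A
  | .alt x1 x2, y => .alt (bcm x1 y) (bcm x2 y)
  | .und a, .alt y1 y2 => .alt (bcm (.und a) y1) (bcm (.und a) y2)
  | .pre a t, .alt y1 y2 => .alt (bcm (.pre a t) y1) (bcm (.pre a t) y2)
  | .delay t, .alt y1 y2 => .alt (bcm (.delay t) y1) (bcm (.delay t) y2)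
  | .und a, .und b => .und (γ a b)
  | .und a, .pre b u => .pre (γ a b) u
  | .pre a t, .und b => .pre (γ a b) t
  | .pre a t, .pre b u => .pre (γ a b) (.alt (.alt (blm t u) (blm u t)) (bcm t u))
  | .delay t, .delay u => .delay (bcm t u)
  | .delay _, .und _ => .und .delta
  | .delay _, .pre _ _ => .und .delta
  | .und _, .delay _ => .und .delta
  | .pre _ _, .delay _ => .und .delta
termination_by x y => x.size + y.size
decreasing_by
  all_goals simp [size] <;> first
    | omega
    | (have := dpart_size hv; have := size_pos t; omega)
    | (have := size_pos y1; have := size_pos y2; omega)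
    | (have := size_pos x1; have := size_pos x2; omega)
end

def bpar (x y : B A) : B A := .alt (.alt (blm γ x y) (blm γ y x)) (bcm γ x y)

end B

variable {A : Type}

abbrev DD (γ : ATD A → ATD A → ATD A) : Tm A → Tm A → Prop := Deriv γ NoAx false

variable {γ : ATD A → ATD A → ATD A}

lemma altL (u : Tm A) {t t'} (h : DD γ t t') : DD γ (.alt t u) (.alt t' u) :=
  .altCongr h (.refl u)
lemma altR (t : Tm A) {u u'} (h : DD γ u u') : DD γ (.alt t u) (.alt t u') :=
  .altCongr (.refl t) h
lemma seqL (u : Tm A) {t t'} (h : DD γ t t') : DD γ (.seq t u) (.seq t' u) :=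
  .seqCongr h (.refl u)
lemma seqR (t : Tm A) {u u'} (h : DD γ u u') : DD γ (.seq t u) (.seq t u') :=
  .seqCongr (.refl t) h
lemma lmL (u : Tm A) {t t'} (h : DD γ t t') : DD γ (.lm t u) (.lm t' u) :=
  .lmCongr h (.refl u)
lemma lmR (t : Tm A) {u u'} (h : DD γ u u') : DD γ (.lm t u) (.lm t u') :=
  .lmCongr (.refl t) h
lemma cmL (u : Tm A) {t t'} (h : DD γ t t') : DD γ (.cm t u) (.cm t' u) :=
  .cmCongr h (.refl u)
lemma cmR (t : Tm A) {u u'} (h : DD γ u u') : DD γ (.cm t u) (.cm t u') :=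
  .cmCongr (.refl t) h

/-- (a+b)+c = (a+c)+b -/
lemma rot (a b c : Tm A) : DD γ (.alt (.alt a b) c) (.alt (.alt a c) b) :=
  ((Deriv.A2 a b c).trans (altR a (Deriv.A1 b c))).trans (Deriv.symm (Deriv.A2 a c b))

/-- (a+b)+(c+d) = (a+c)+(b+d) -/
lemma exch (a b c d : Tm A) : DD γ (.alt (.alt a b) (.alt c d)) (.alt (.alt a c) (.alt b d)) := by
  refine (Deriv.A2 a b (.alt c d)).trans (Deriv.trans ?_ (Deriv.symm (Deriv.A2 a c (.alt b d))))
  refine altR a ?_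
  exact ((Deriv.symm (Deriv.A2 b c d)).trans (altL d (Deriv.A1 b c))).trans (Deriv.A2 c b d)

def sL : List (Tm A) → Tm A := fun l => l.foldr .alt (.und .delta)

lemma sL_single (t : Tm A) : DD γ t (sL [t]) := Deriv.symm (Deriv.A6DR t)

lemma sL_append : ∀ (l m : List (Tm A)), DD γ (.alt (sL l) (sL m)) (sL (l ++ m))
  | [], m => (Deriv.A1 _ _).trans (Deriv.A6DR _)
  | a :: l, m => (Deriv.A2 a (sL l) (sL m)).trans (altR a (sL_append l m))

lemma sL_perm {l l' : List (Tm A)} (h : l.Perm l') : DD γ (sL l) (sL l') := by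
  induction h with
  | nil => exact .refl _
  | cons x _ ih => exact altR x ih
  | swap x y l =>
      exact (Deriv.symm (Deriv.A2 y x (sL l))).trans
        ((altL (sL l) (Deriv.A1 y x)).trans (Deriv.A2 x y (sL l)))
  | trans _ _ ih1 ih2 => exact ih1.trans ih2

lemma sL_congr : ∀ {l l' : List (Tm A)}, List.Forall₂ (DD γ) l l' → DD γ (sL l) (sL l')
  | _, _, .nil => .refl _
  | _, _, .cons h hs => .altCongr h (sL_congr hs)

/-- flatten a 3-sum -/
lemma flat3 {a b c : Tm A} {la lb lc : List (Tm A)} (h1 : DD γ a (sL la))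
    (h2 : DD γ b (sL lb)) (h3 : DD γ c (sL lc)) :
    DD γ (.alt (.alt a b) c) (sL (la ++ lb ++ lc)) :=
  (Deriv.altCongr (Deriv.altCongr h1 h2) h3).trans
    ((altL _ (sL_append la lb)).trans (sL_append _ lc))

/-! ### timeout of "now" terms -/

/-- now-term: `NT a none = a̲`, `NT a (some P) = a̲·P`. -/
def NT (a : ATD A) : Option (Tm A) → Tm A
  | none => .und a
  | some P => .seq (.und a) P

def pc : Option (Tm A) → Option (Tm A) → Option (Tm A)
  | some P, some Q => some (.par P Q)
  | some P, none => some P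
  | none, q => q

lemma toNT (a : ATD A) (p : Option (Tm A)) : DD γ (.timeout (NT a p)) (NT a p) := by
  cases p with
  | none => exact Deriv.DRTO1 a
  | some P => exact (Deriv.DRTO3 _ P).trans (seqL P (Deriv.DRTO1 a))

lemma cmNT (hc : ∀ a b, γ a b = γ b a) (a b : ATD A) (p q : Option (Tm A)) :
    DD γ (.cm (NT a p) (NT b q)) (NT (γ a b) (pc p q)) := by
  cases p with
  | none => cases q with
    | none => exact Deriv.CFDR a b
    | some Q => exact (Deriv.CM6DR a b Q).trans (seqL Q (Deriv.CFDR a b))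
  | some P => cases q with
    | none => exact (Deriv.CM5DR a b P).trans (seqL P (Deriv.CFDR a b))
    | some Q => exact (Deriv.CM7DR a b P Q).trans (seqL _ (Deriv.CFDR a b))

lemma cmSigNT (T : Tm A) (a : ATD A) (p : Option (Tm A)) :
    DD γ (.cm (.delay T) (NT a p)) (.und .delta) :=
  (cmR _ (Deriv.symm (toNT a p))).trans (Deriv.DRCM4 T _)

lemma cmNTSig (T : Tm A) (a : ATD A) (p : Option (Tm A)) :
    DD γ (.cm (NT a p) (.delay T)) (.und .delta) :=
  (cmL _ (Deriv.symm (toNT a p))).trans (Deriv.DRCM3 _ T)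

lemma ntDelta (p : Option (Tm A)) : DD γ (NT ATD.delta p) (.und .delta) := by
  cases p with
  | none => exact .refl _
  | some P => exact Deriv.A7DR P

lemma lmDeltaL (Z : Tm A) : DD γ (.lm (.und .delta) Z) (.und .delta) :=
  (Deriv.CM2DR .delta Z).trans (Deriv.A7DR Z)


section partB
open B
variable {A : Type} {γ : ATD A → ATD A → ATD A}

/-! ### equation lemmas for blm / bcm -/

variable (γ)

lemma blm_und (a : ATD A) (y : B A) : blm γ (.und a) y = .pre a y := by rw [blm]
lemma blm_pre (a : ATD A) (t y : B A) :
    blm γ (.pre a t) y = .pre a (bpar γ t y) := by rw [blm]; rfl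
lemma blm_alt (x1 x2 y : B A) :
    blm γ (.alt x1 x2) y = .alt (blm γ x1 y) (blm γ x2 y) := by rw [blm]
lemma blm_delay_none {y : B A} (t : B A) (h : y.dpart = none) :
    blm γ (.delay t) y = .und .delta := by rw [blm]; split <;> simp_all
lemma blm_delay_some {y v : B A} (t : B A) (h : y.dpart = some v) :
    blm γ (.delay t) y = .delay (blm γ t v) := by rw [blm]; split <;> simp_all

lemma bcm_alt_l (x1 x2 y : B A) :
    bcm γ (.alt x1 x2) y = .alt (bcm γ x1 y) (bcm γ x2 y) := by rw [bcm]
lemma bcm_und_alt (a : ATD A) (y1 y2 : B A) :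
    bcm γ (.und a) (.alt y1 y2) = .alt (bcm γ (.und a) y1) (bcm γ (.und a) y2) := by rw [bcm]
lemma bcm_pre_alt (a : ATD A) (t y1 y2 : B A) :
    bcm γ (.pre a t) (.alt y1 y2) = .alt (bcm γ (.pre a t) y1) (bcm γ (.pre a t) y2) := by
  rw [bcm]
lemma bcm_delay_alt (t y1 y2 : B A) :
    bcm γ (.delay t) (.alt y1 y2) = .alt (bcm γ (.delay t) y1) (bcm γ (.delay t) y2) := by
  rw [bcm]
lemma bcm_und_und (a b : ATD A) : bcm γ (.und a) (.und b) = .und (γ a b) := by rw [bcm]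
lemma bcm_und_pre (a b : ATD A) (u : B A) :
    bcm γ (.und a) (.pre b u) = .pre (γ a b) u := by rw [bcm]
lemma bcm_pre_und (a b : ATD A) (t : B A) :
    bcm γ (.pre a t) (.und b) = .pre (γ a b) t := by rw [bcm]
lemma bcm_pre_pre (a b : ATD A) (t u : B A) :
    bcm γ (.pre a t) (.pre b u) = .pre (γ a b) (bpar γ t u) := by rw [bcm]; rfl
lemma bcm_delay_delay (t u : B A) :
    bcm γ (.delay t) (.delay u) = .delay (bcm γ t u) := by rw [bcm]
lemma bcm_delay_und (t : B A) (b : ATD A) :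
    bcm γ (.delay t) (.und b) = .und .delta := by rw [bcm]
lemma bcm_delay_pre (t : B A) (b : ATD A) (u : B A) :
    bcm γ (.delay t) (.pre b u) = .und .delta := by rw [bcm]
lemma bcm_und_delay (a : ATD A) (u : B A) :
    bcm γ (.und a) (.delay u) = .und .delta := by rw [bcm]
lemma bcm_pre_delay (a : ATD A) (t u : B A) :
    bcm γ (.pre a t) (.delay u) = .und .delta := by rw [bcm]

variable {γ}

/-! ### decomposition lemmas -/

lemma decompNone : ∀ {y : B A}, y.dpart = none → DD γ y.interp (.timeout y.interp) := by
  intro y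
  induction y with
  | und a => intro _; exact Deriv.symm (Deriv.DRTO1 a)
  | pre a t ih =>
      intro _
      exact Deriv.symm ((Deriv.DRTO3 _ _).trans (seqL _ (Deriv.DRTO1 a)))
  | delay t ih => intro h; simp [B.dpart] at h
  | alt y1 y2 ih1 ih2 =>
      intro h
      simp only [B.dpart] at h
      rcases h1 : y1.dpart with _ | w1 <;> rcases h2 : y2.dpart with _ | w2 <;>
        rw [h1, h2] at h <;> simp [B.dmerge] at h
      exact (Deriv.altCongr (ih1 h1) (ih2 h2)).trans (Deriv.symm (Deriv.DRTO2 _ _))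

lemma decompSome : ∀ {y w : B A}, y.dpart = some w →
    DD γ y.interp (.alt (.timeout y.interp) (.delay w.interp)) := by
  intro y
  induction y with
  | und a => intro w h; simp [B.dpart] at h
  | pre a t ih => intro w h; simp [B.dpart] at h
  | delay t ih =>
      intro w h
      simp only [B.dpart, Option.some.injEq] at h
      subst h
      refine Deriv.trans ?_ (altL _ (Deriv.symm (Deriv.DRTO4 t.interp)))
      exact Deriv.symm ((Deriv.A1 _ _).trans (Deriv.A6DR _))
  | alt y1 y2 ih1 ih2 =>
      intro w h
      simp only [B.dpart] at h
      rcases h1 : y1.dpart with _ | w1 <;> rcases h2 : y2.dpart with _ | w2 <;>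
          rw [h1, h2] at h <;> simp [B.dmerge] at h <;> subst h
      · -- y1 no delay, y2 = ν y2 + σ w
        refine ((Deriv.altCongr (decompNone h1) (ih2 h2)).trans ?_).trans
          (altL _ (Deriv.symm (Deriv.DRTO2 _ _)))
        exact Deriv.symm (Deriv.A2 _ _ _)
      · -- y1 = ν y1 + σ w, y2 no delay
        exact ((Deriv.altCongr (ih1 h1) (decompNone h2)).trans (rot _ _ _)).trans
          (altL _ (Deriv.symm (Deriv.DRTO2 _ _)))
      · -- both
        refine ((Deriv.altCongr (ih1 h1) (ih2 h2)).trans (exch _ _ _ _)).trans ?_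
        exact Deriv.altCongr (Deriv.symm (Deriv.DRTO2 _ _)) (Deriv.DRT1 _ _)

lemma lmDelayNone {y : B A} (X : Tm A) (h : y.dpart = none) :
    DD γ (.lm (.delay X) y.interp) (.und .delta) :=
  (lmR _ (decompNone h)).trans (Deriv.DRCM1 X _)

lemma lmDelaySome {y w : B A} (X : Tm A) (h : y.dpart = some w) :
    DD γ (.lm (.delay X) y.interp) (.delay (.lm X w.interp)) :=
  (lmR _ (decompSome h)).trans (Deriv.DRCM2 X _ _)

/-! ### correctness of blm, bcm, bpar -/

theorem lmcm_correct : ∀ (n : ℕ) (x y : B A), x.size + y.size ≤ n →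
    DD γ (.lm x.interp y.interp) (blm γ x y).interp ∧
    DD γ (.cm x.interp y.interp) (bcm γ x y).interp := by
  intro n
  induction n using Nat.strong_induction_on with
  | _ n ih =>
  intro x y hn
  have parC : ∀ (u v : B A), u.size + v.size < n →
      DD γ (.par u.interp v.interp) (bpar γ u v).interp := by
    intro u v h
    have h1 := (ih _ h u v le_rfl).1
    have h2 := (ih _ h v u (by omega)).1
    have h3 := (ih _ h u v le_rfl).2
    exact (Deriv.CM1 _ _).trans (Deriv.altCongr (Deriv.altCongr h1 h2) h3)
  constructor
  · -- blm
    cases x with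
    | und a => rw [blm_und]; exact Deriv.CM2DR a _
    | pre a t =>
        rw [blm_pre]
        have hs := B.size_pos t
        have hy := B.size_pos y
        refine (Deriv.CM3DR a _ _).trans (seqR _ (parC t y ?_))
        simp [B.size] at hn; omega
    | alt x1 x2 =>
        rw [blm_alt]
        have h1 := B.size_pos x1
        have h2 := B.size_pos x2
        refine (Deriv.CM4 _ _ _).trans (Deriv.altCongr ?_ ?_)
        · exact (ih (x1.size + y.size) (by simp [B.size] at hn; omega) x1 y le_rfl).1
        · exact (ih (x2.size + y.size) (by simp [B.size] at hn; omega) x2 y le_rfl).1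
    | delay t =>
        rcases hdp : y.dpart with _ | w
        · rw [blm_delay_none γ t hdp]; exact lmDelayNone t.interp hdp
        · rw [blm_delay_some γ t hdp]
          have hw := dpart_size hdp
          have ht := B.size_pos t
          refine (lmDelaySome t.interp hdp).trans (Deriv.delayCongr ?_)
          exact (ih (t.size + w.size) (by simp [B.size] at hn; omega) t w le_rfl).1
  · -- bcm
    cases x with
    | alt x1 x2 =>
        rw [bcm_alt_l]
        have h1 := B.size_pos x1
        have h2 := B.size_pos x2
        refine (Deriv.CM8 _ _ _).trans (Deriv.altCongr ?_ ?_)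
        · exact (ih (x1.size + y.size) (by simp [B.size] at hn; omega) x1 y le_rfl).2
        · exact (ih (x2.size + y.size) (by simp [B.size] at hn; omega) x2 y le_rfl).2
    | und a =>
        cases y with
        | alt y1 y2 =>
            rw [bcm_und_alt]
            have h1 := B.size_pos y1
            have h2 := B.size_pos y2
            refine (Deriv.CM9 _ _ _).trans (Deriv.altCongr ?_ ?_)
            · exact (ih ((B.und a).size + y1.size) (by simp [B.size] at hn ⊢; omega)
                (B.und a) y1 le_rfl).2
            · exact (ih ((B.und a).size + y2.size) (by simp [B.size] at hn ⊢; omega)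
                (B.und a) y2 le_rfl).2
        | und b => rw [bcm_und_und]; exact Deriv.CFDR a b
        | pre b u =>
            rw [bcm_und_pre]
            exact (Deriv.CM6DR a b _).trans (seqL _ (Deriv.CFDR a b))
        | delay u =>
            rw [bcm_und_delay]
            exact (cmL _ (Deriv.symm (toNT a none))).trans (Deriv.DRCM3 _ _)
    | pre a t =>
        cases y with
        | alt y1 y2 =>
            rw [bcm_pre_alt]
            have h1 := B.size_pos y1
            have h2 := B.size_pos y2
            refine (Deriv.CM9 _ _ _).trans (Deriv.altCongr ?_ ?_)
            · exact (ih ((B.pre a t).size + y1.size) (by simp [B.size] at hn ⊢; omega)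
                (B.pre a t) y1 le_rfl).2
            · exact (ih ((B.pre a t).size + y2.size) (by simp [B.size] at hn ⊢; omega)
                (B.pre a t) y2 le_rfl).2
        | und b =>
            rw [bcm_pre_und]
            exact (Deriv.CM5DR a b _).trans (seqL _ (Deriv.CFDR a b))
        | pre b u =>
            rw [bcm_pre_pre]
            have h1 := B.size_pos t
            have h2 := B.size_pos u
            refine (Deriv.CM7DR a b _ _).trans
              (Deriv.seqCongr (Deriv.CFDR a b) (parC t u ?_))
            simp [B.size] at hn; omega
        | delay u =>
            rw [bcm_pre_delay]
            exact (cmL _ (Deriv.symm (toNT a (some t.interp)))).trans (Deriv.DRCM3 _ _)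
    | delay t =>
        cases y with
        | alt y1 y2 =>
            rw [bcm_delay_alt]
            have h1 := B.size_pos y1
            have h2 := B.size_pos y2
            refine (Deriv.CM9 _ _ _).trans (Deriv.altCongr ?_ ?_)
            · exact (ih ((B.delay t).size + y1.size) (by simp [B.size] at hn ⊢; omega)
                (B.delay t) y1 le_rfl).2
            · exact (ih ((B.delay t).size + y2.size) (by simp [B.size] at hn ⊢; omega)
                (B.delay t) y2 le_rfl).2
        | und b => rw [bcm_delay_und]; exact cmSigNT t.interp b none
        | pre b u => rw [bcm_delay_pre]; exact cmSigNT t.interp b (some u.interp)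
        | delay u =>
            rw [bcm_delay_delay]
            have h1 := B.size_pos t
            have h2 := B.size_pos u
            refine (Deriv.DRCM5 _ _).trans (Deriv.delayCongr ?_)
            exact (ih (t.size + u.size) (by simp [B.size] at hn; omega) t u le_rfl).2

lemma lmCor (x y : B A) : DD γ (.lm x.interp y.interp) (blm γ x y).interp :=
  (lmcm_correct (x.size + y.size) x y le_rfl).1

lemma cmCor (x y : B A) : DD γ (.cm x.interp y.interp) (bcm γ x y).interp :=
  (lmcm_correct (x.size + y.size) x y le_rfl).2

lemma parCor (x y : B A) : DD γ (.par x.interp y.interp) (bpar γ x y).interp :=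
  (Deriv.CM1 _ _).trans (Deriv.altCongr (Deriv.altCongr (lmCor x y) (lmCor y x)) (cmCor x y))

end partB

section partC
open B
variable {A : Type} {γ : ATD A → ATD A → ATD A}

theorem cm_comm (hc : ∀ a b, γ a b = γ b a) : ∀ (n : ℕ) (x y : B A), x.size + y.size ≤ n →
    DD γ (.cm x.interp y.interp) (.cm y.interp x.interp) := by
  intro n
  induction n using Nat.strong_induction_on with
  | _ n ih =>
  intro x y hn
  have parC : ∀ (u v : B A), u.size + v.size < n →
      DD γ (.par u.interp v.interp) (.par v.interp u.interp) := by
    intro u v h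
    refine (Deriv.CM1 _ _).trans (Deriv.trans ?_ (Deriv.symm (Deriv.CM1 _ _)))
    exact Deriv.altCongr (Deriv.A1 _ _) (ih _ h u v le_rfl)
  cases x with
  | alt x1 x2 =>
      have h1 := B.size_pos x1
      have h2 := B.size_pos x2
      refine (Deriv.CM8 _ _ _).trans (Deriv.trans (Deriv.altCongr ?_ ?_)
        (Deriv.symm (Deriv.CM9 _ _ _)))
      · exact ih (x1.size + y.size) (by simp [B.size] at hn; omega) x1 y le_rfl
      · exact ih (x2.size + y.size) (by simp [B.size] at hn; omega) x2 y le_rfl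
  | und a =>
      cases y with
      | alt y1 y2 =>
          have h1 := B.size_pos y1
          have h2 := B.size_pos y2
          refine (Deriv.CM9 _ _ _).trans (Deriv.trans (Deriv.altCongr ?_ ?_)
            (Deriv.symm (Deriv.CM8 _ _ _)))
          · exact ih ((B.und a).size + y1.size) (by simp [B.size] at hn ⊢; omega) _ y1 le_rfl
          · exact ih ((B.und a).size + y2.size) (by simp [B.size] at hn ⊢; omega) _ y2 le_rfl
      | und b =>
          refine (Deriv.CFDR a b).trans ?_
          rw [hc a b]; exact Deriv.symm (Deriv.CFDR b a)
      | pre b u =>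
          refine ((Deriv.CM6DR a b _).trans (seqL _ (Deriv.CFDR a b))).trans ?_
          rw [hc a b]
          exact Deriv.symm ((Deriv.CM5DR b a _).trans (seqL _ (Deriv.CFDR b a)))
      | delay u =>
          refine (cmNTSig u.interp a none).trans (Deriv.symm (cmSigNT u.interp a none))
  | pre a t =>
      cases y with
      | alt y1 y2 =>
          have h1 := B.size_pos y1
          have h2 := B.size_pos y2
          refine (Deriv.CM9 _ _ _).trans (Deriv.trans (Deriv.altCongr ?_ ?_)
            (Deriv.symm (Deriv.CM8 _ _ _)))
          · exact ih ((B.pre a t).size + y1.size) (by simp [B.size] at hn ⊢; omega) _ y1 le_rfl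
          · exact ih ((B.pre a t).size + y2.size) (by simp [B.size] at hn ⊢; omega) _ y2 le_rfl
      | und b =>
          refine ((Deriv.CM5DR a b _).trans (seqL _ (Deriv.CFDR a b))).trans ?_
          rw [hc a b]
          exact Deriv.symm ((Deriv.CM6DR b a _).trans (seqL _ (Deriv.CFDR b a)))
      | pre b u =>
          have h1 := B.size_pos t
          have h2 := B.size_pos u
          refine ((Deriv.CM7DR a b _ _).trans
            (Deriv.seqCongr (Deriv.CFDR a b) (parC t u (by simp [B.size] at hn; omega)))).trans ?_
          rw [hc a b]
          exact Deriv.symm ((Deriv.CM7DR b a _ _).trans (seqL _ (Deriv.CFDR b a)))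
      | delay u =>
          exact (cmNTSig u.interp a (some t.interp)).trans
            (Deriv.symm (cmSigNT u.interp a (some t.interp)))
  | delay t =>
      cases y with
      | alt y1 y2 =>
          have h1 := B.size_pos y1
          have h2 := B.size_pos y2
          refine (Deriv.CM9 _ _ _).trans (Deriv.trans (Deriv.altCongr ?_ ?_)
            (Deriv.symm (Deriv.CM8 _ _ _)))
          · exact ih ((B.delay t).size + y1.size) (by simp [B.size] at hn ⊢; omega) _ y1 le_rfl
          · exact ih ((B.delay t).size + y2.size) (by simp [B.size] at hn ⊢; omega) _ y2 le_rfl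
      | und b =>
          exact (cmSigNT t.interp b none).trans (Deriv.symm (cmNTSig t.interp b none))
      | pre b u =>
          exact (cmSigNT t.interp b (some u.interp)).trans
            (Deriv.symm (cmNTSig t.interp b (some u.interp)))
      | delay u =>
          have h1 := B.size_pos t
          have h2 := B.size_pos u
          refine (Deriv.DRCM5 _ _).trans (Deriv.trans
            (Deriv.delayCongr (ih (t.size + u.size) (by simp [B.size] at hn; omega) t u le_rfl))
            (Deriv.symm (Deriv.DRCM5 _ _)))

lemma cmComm (hc : ∀ a b, γ a b = γ b a) (x y : B A) :
    DD γ (.cm x.interp y.interp) (.cm y.interp x.interp) :=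
  cm_comm hc (x.size + y.size) x y le_rfl

lemma parComm (hc : ∀ a b, γ a b = γ b a) (x y : B A) :
    DD γ (.par x.interp y.interp) (.par y.interp x.interp) :=
  (Deriv.CM1 _ _).trans (Deriv.trans
    (Deriv.altCongr (Deriv.A1 _ _) (cmComm hc x y)) (Deriv.symm (Deriv.CM1 _ _)))

/-- cm with δ̲ on the left. -/
lemma cmDeltaL (hd : ∀ a, γ ATD.delta a = ATD.delta) :
    ∀ (z : B A), DD γ (.cm (.und .delta) z.interp) (.und .delta) := by
  intro z
  induction z with
  | und b =>
      refine (Deriv.CFDR .delta b).trans ?_; rw [hd b]; exact .refl _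
  | pre b u ih =>
      refine ((Deriv.CM6DR .delta b _).trans (seqL _ (Deriv.CFDR .delta b))).trans ?_
      rw [hd b]; exact Deriv.A7DR _
  | delay u ih => exact cmNTSig u.interp .delta none
  | alt z1 z2 ih1 ih2 =>
      exact ((Deriv.CM9 _ _ _).trans (Deriv.altCongr ih1 ih2)).trans (Deriv.A3 _)

/-- cm with δ̲ on the right. -/
lemma cmDeltaR (hc : ∀ a b, γ a b = γ b a) (hd : ∀ a, γ ATD.delta a = ATD.delta)
    (z : B A) : DD γ (.cm z.interp (.und .delta)) (.und .delta) :=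
  (cmComm hc z (B.und .delta)).trans (cmDeltaL hd z)

end partC

section partD
open B
variable {A : Type} {γ : ATD A → ATD A → ATD A}

lemma dmerge_none {o1 o2 : Option (B A)} (h1 : o1 = none) (h2 : o2 = none) :
    dmerge o1 o2 = none := by subst h1; subst h2; rfl

lemma dmerge_eq_none {o1 o2 : Option (B A)} (h : dmerge o1 o2 = none) :
    o1 = none ∧ o2 = none := by
  cases o1 <;> cases o2 <;> simp [dmerge] at h ⊢

lemma dpart_blm_none : ∀ {x y : B A}, (x.dpart = none ∨ y.dpart = none) →
    (blm γ x y).dpart = none := by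
  intro x
  induction x with
  | und a => intro y h; rw [blm_und]; rfl
  | pre a t ih => intro y h; rw [blm_pre]; rfl
  | delay t ih =>
      intro y h
      rcases h with h | h
      · simp [B.dpart] at h
      · rw [blm_delay_none γ t h]; rfl
  | alt x1 x2 ih1 ih2 =>
      intro y h
      rw [blm_alt]
      show dmerge _ _ = none
      rcases h with h | h
      · simp only [B.dpart] at h
        obtain ⟨h1, h2⟩ := dmerge_eq_none h
        exact dmerge_none (ih1 (Or.inl h1)) (ih2 (Or.inl h2))
      · exact dmerge_none (ih1 (Or.inr h)) (ih2 (Or.inr h))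

lemma dpart_blm_some : ∀ {x y w v : B A}, x.dpart = some w → y.dpart = some v →
    ∃ D : B A, (blm γ x y).dpart = some D ∧ DD γ D.interp (.lm w.interp v.interp) := by
  intro x
  induction x with
  | und a => intro y w v hx hy; simp [B.dpart] at hx
  | pre a t ih => intro y w v hx hy; simp [B.dpart] at hx
  | delay t ih =>
      intro y w v hx hy
      simp only [B.dpart, Option.some.injEq] at hx
      subst hx
      rw [blm_delay_some γ t hy]
      exact ⟨blm γ t v, rfl, Deriv.symm (lmCor t v)⟩
  | alt x1 x2 ih1 ih2 =>
      intro y w v hx hy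
      simp only [B.dpart] at hx
      rw [blm_alt]
      rcases h1 : x1.dpart with _ | w1 <;> rcases h2 : x2.dpart with _ | w2 <;>
        rw [h1, h2] at hx <;> simp [dmerge] at hx <;> subst hx
      · obtain ⟨D, hD, hd⟩ := ih2 h2 hy
        refine ⟨D, ?_, hd⟩
        show dmerge _ _ = some D
        rw [dpart_blm_none (Or.inl h1), hD]; rfl
      · obtain ⟨D, hD, hd⟩ := ih1 h1 hy
        refine ⟨D, ?_, hd⟩
        show dmerge _ _ = some D
        rw [dpart_blm_none (Or.inl h2), hD]; rfl
      · obtain ⟨D1, hD1, hd1⟩ := ih1 h1 hy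
        obtain ⟨D2, hD2, hd2⟩ := ih2 h2 hy
        refine ⟨.alt D1 D2, ?_, ?_⟩
        · show dmerge _ _ = _
          rw [hD1, hD2]; rfl
        · exact (Deriv.altCongr hd1 hd2).trans (Deriv.symm (Deriv.CM4 _ _ _))

lemma dpart_bcm_none : ∀ (n : ℕ) (x y : B A), x.size + y.size ≤ n →
    (x.dpart = none ∨ y.dpart = none) → (bcm γ x y).dpart = none := by
  intro n
  induction n using Nat.strong_induction_on with
  | _ n ih =>
  intro x y hn h
  have hp1 : ∀ (x1 x2 : B A), x = .alt x1 x2 → (x1.dpart = none ∨ y.dpart = none) →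
      (x2.dpart = none ∨ y.dpart = none) → (bcm γ (B.alt x1 x2) y).dpart = none := by
    intro x1 x2 hx hh1 hh2
    subst hx
    have h1 := B.size_pos x1
    have h2 := B.size_pos x2
    rw [bcm_alt_l]
    exact dmerge_none
      (ih (x1.size + y.size) (by simp [B.size] at hn; omega) x1 y le_rfl hh1)
      (ih (x2.size + y.size) (by simp [B.size] at hn; omega) x2 y le_rfl hh2)
  cases x with
  | alt x1 x2 =>
      rcases h with h | h
      · simp only [B.dpart] at h
        obtain ⟨ha, hb⟩ := dmerge_eq_none h
        exact hp1 x1 x2 rfl (Or.inl ha) (Or.inl hb)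
      · exact hp1 x1 x2 rfl (Or.inr h) (Or.inr h)
  | und a =>
      cases y with
      | alt y1 y2 =>
          have h1 := B.size_pos y1
          have h2 := B.size_pos y2
          rw [bcm_und_alt]
          exact dmerge_none
            (ih (1 + y1.size) (by simp [B.size] at hn ⊢; omega) _ y1 (by simp [B.size]) (Or.inl rfl))
            (ih (1 + y2.size) (by simp [B.size] at hn ⊢; omega) _ y2 (by simp [B.size]) (Or.inl rfl))
      | und b => rw [bcm_und_und]; rfl
      | pre b u => rw [bcm_und_pre]; rfl
      | delay u => rw [bcm_und_delay]; rfl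
  | pre a t =>
      cases y with
      | alt y1 y2 =>
          have h1 := B.size_pos y1
          have h2 := B.size_pos y2
          rw [bcm_pre_alt]
          refine dmerge_none
            (ih ((B.pre a t).size + y1.size) (by simp [B.size] at hn ⊢; omega) _ y1 le_rfl (Or.inl rfl))
            (ih ((B.pre a t).size + y2.size) (by simp [B.size] at hn ⊢; omega) _ y2 le_rfl (Or.inl rfl))
      | und b => rw [bcm_pre_und]; rfl
      | pre b u => rw [bcm_pre_pre]; rfl
      | delay u => rw [bcm_pre_delay]; rfl
  | delay t =>
      have hy : y.dpart = none := by
        rcases h with h | h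
        · simp [B.dpart] at h
        · exact h
      cases y with
      | alt y1 y2 =>
          simp only [B.dpart] at hy
          obtain ⟨ha, hb⟩ := dmerge_eq_none hy
          have h1 := B.size_pos y1
          have h2 := B.size_pos y2
          rw [bcm_delay_alt]
          refine dmerge_none
            (ih ((B.delay t).size + y1.size) (by simp [B.size] at hn ⊢; omega) _ y1 le_rfl (Or.inr ha))
            (ih ((B.delay t).size + y2.size) (by simp [B.size] at hn ⊢; omega) _ y2 le_rfl (Or.inr hb))
      | und b => rw [bcm_delay_und]; rfl
      | pre b u => rw [bcm_delay_pre]; rfl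
      | delay u => simp [B.dpart] at hy

lemma dpart_bcm_none' {x y : B A} (h : x.dpart = none ∨ y.dpart = none) :
    (bcm γ x y).dpart = none := dpart_bcm_none (x.size + y.size) x y le_rfl h

lemma dpart_bcm_some : ∀ (n : ℕ) (x y w v : B A), x.size + y.size ≤ n →
    x.dpart = some w → y.dpart = some v →
    ∃ D : B A, (bcm γ x y).dpart = some D ∧ DD γ D.interp (.cm w.interp v.interp) := by
  intro n
  induction n using Nat.strong_induction_on with
  | _ n ih =>
  intro x y w v hn hx hy
  cases x with
  | und a => simp [B.dpart] at hx
  | pre a t => simp [B.dpart] at hx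
  | alt x1 x2 =>
      simp only [B.dpart] at hx
      have hs1 := B.size_pos x1
      have hs2 := B.size_pos x2
      rw [bcm_alt_l]
      rcases h1 : x1.dpart with _ | w1 <;> rcases h2 : x2.dpart with _ | w2 <;>
        rw [h1, h2] at hx <;> simp [dmerge] at hx <;> subst hx
      · obtain ⟨D, hD, hd⟩ := ih (x2.size + y.size) (by simp [B.size] at hn; omega) x2 y w2 v le_rfl h2 hy
        refine ⟨D, ?_, hd⟩
        show dmerge _ _ = some D
        rw [dpart_bcm_none' (Or.inl h1), hD]; rfl
      · obtain ⟨D, hD, hd⟩ := ih (x1.size + y.size) (by simp [B.size] at hn; omega) x1 y w1 v le_rfl h1 hy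
        refine ⟨D, ?_, hd⟩
        show dmerge _ _ = some D
        rw [dpart_bcm_none' (Or.inl h2), hD]; rfl
      · obtain ⟨D1, hD1, hd1⟩ := ih (x1.size + y.size) (by simp [B.size] at hn; omega) x1 y w1 v le_rfl h1 hy
        obtain ⟨D2, hD2, hd2⟩ := ih (x2.size + y.size) (by simp [B.size] at hn; omega) x2 y w2 v le_rfl h2 hy
        refine ⟨.alt D1 D2, ?_, ?_⟩
        · show dmerge _ _ = _
          rw [hD1, hD2]; rfl
        · exact (Deriv.altCongr hd1 hd2).trans (Deriv.symm (Deriv.CM8 _ _ _))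
  | delay t =>
      simp only [B.dpart, Option.some.injEq] at hx
      subst hx
      cases y with
      | und b => simp [B.dpart] at hy
      | pre b u => simp [B.dpart] at hy
      | delay u =>
          simp only [B.dpart, Option.some.injEq] at hy
          subst hy
          rw [bcm_delay_delay]
          exact ⟨bcm γ t u, rfl, Deriv.symm (cmCor t u)⟩
      | alt y1 y2 =>
          simp only [B.dpart] at hy
          have hs1 := B.size_pos y1
          have hs2 := B.size_pos y2
          rw [bcm_delay_alt]
          rcases h1 : y1.dpart with _ | v1 <;> rcases h2 : y2.dpart with _ | v2 <;>
            rw [h1, h2] at hy <;> simp [dmerge] at hy <;> subst hy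
          · obtain ⟨D, hD, hd⟩ := ih ((B.delay t).size + y2.size) (by simp [B.size] at hn ⊢; omega)
              (B.delay t) y2 t v2 le_rfl (by simp [B.dpart]) h2
            refine ⟨D, ?_, hd⟩
            show dmerge _ _ = some D
            rw [dpart_bcm_none' (Or.inr h1), hD]; rfl
          · obtain ⟨D, hD, hd⟩ := ih ((B.delay t).size + y1.size) (by simp [B.size] at hn ⊢; omega)
              (B.delay t) y1 t v1 le_rfl (by simp [B.dpart]) h1
            refine ⟨D, ?_, hd⟩
            show dmerge _ _ = some D
            rw [dpart_bcm_none' (Or.inr h2), hD]; rfl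
          · obtain ⟨D1, hD1, hd1⟩ := ih ((B.delay t).size + y1.size) (by simp [B.size] at hn ⊢; omega)
              (B.delay t) y1 t v1 le_rfl (by simp [B.dpart]) h1
            obtain ⟨D2, hD2, hd2⟩ := ih ((B.delay t).size + y2.size) (by simp [B.size] at hn ⊢; omega)
              (B.delay t) y2 t v2 le_rfl (by simp [B.dpart]) h2
            refine ⟨.alt D1 D2, ?_, ?_⟩
            · show dmerge _ _ = _
              rw [hD1, hD2]; rfl
            · exact (Deriv.altCongr hd1 hd2).trans (Deriv.symm (Deriv.CM9 _ _ _))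

lemma dpart_bpar_none {x y : B A} (h : x.dpart = none ∨ y.dpart = none) :
    (bpar γ x y).dpart = none := by
  show dmerge (dmerge _ _) _ = none
  exact dmerge_none (dmerge_none (dpart_blm_none h) (dpart_blm_none h.symm))
    (dpart_bcm_none' h)

lemma dpart_bpar_some {x y w v : B A} (hx : x.dpart = some w) (hy : y.dpart = some v) :
    ∃ D : B A, (bpar γ x y).dpart = some D ∧ DD γ D.interp (.par w.interp v.interp) := by
  obtain ⟨D1, hD1, hd1⟩ := dpart_blm_some (γ := γ) hx hy
  obtain ⟨D2, hD2, hd2⟩ := dpart_blm_some (γ := γ) hy hx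
  obtain ⟨D3, hD3, hd3⟩ := dpart_bcm_some (x.size + y.size) x y w v le_rfl hx hy
  refine ⟨.alt (.alt D1 D2) D3, ?_, ?_⟩
  · show dmerge (dmerge _ _) _ = _
    rw [hD1, hD2, hD3]; rfl
  · exact (Deriv.altCongr (Deriv.altCongr hd1 hd2) hd3).trans (Deriv.symm (Deriv.CM1 _ _))

end partD

section partE
open B
variable {A : Type} {γ : ATD A → ATD A → ATD A}

/-- distribution step for cm-associativity, alt in 2nd arg -/
lemma caStepY {X Y1 Y2 Z : Tm A}
    (h1 : DD γ (.cm (.cm X Y1) Z) (.cm X (.cm Y1 Z)))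
    (h2 : DD γ (.cm (.cm X Y2) Z) (.cm X (.cm Y2 Z))) :
    DD γ (.cm (.cm X (.alt Y1 Y2)) Z) (.cm X (.cm (.alt Y1 Y2) Z)) :=
  ((((cmL _ (Deriv.CM9 _ _ _)).trans (Deriv.CM8 _ _ _)).trans
    (Deriv.altCongr h1 h2)).trans (Deriv.symm (Deriv.CM9 _ _ _))).trans
    (cmR _ (Deriv.symm (Deriv.CM8 _ _ _)))

lemma caStepZ {X Y Z1 Z2 : Tm A}
    (h1 : DD γ (.cm (.cm X Y) Z1) (.cm X (.cm Y Z1)))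
    (h2 : DD γ (.cm (.cm X Y) Z2) (.cm X (.cm Y Z2))) :
    DD γ (.cm (.cm X Y) (.alt Z1 Z2)) (.cm X (.cm Y (.alt Z1 Z2))) :=
  (((Deriv.CM9 _ _ _).trans (Deriv.altCongr h1 h2)).trans
    (Deriv.symm (Deriv.CM9 _ _ _))).trans (cmR _ (Deriv.symm (Deriv.CM9 _ _ _)))

theorem sc_main (hc : ∀ a b, γ a b = γ b a) (ha : ∀ a b c, γ (γ a b) c = γ a (γ b c))
    (hd : ∀ a, γ ATD.delta a = ATD.delta) :
    ∀ (n : ℕ) (x y z : B A), x.size + y.size + z.size ≤ n →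
    (DD γ (.lm (.lm x.interp y.interp) z.interp) (.lm x.interp (.par y.interp z.interp)) ∧
     DD γ (.cm x.interp (.lm y.interp z.interp)) (.lm (.cm x.interp y.interp) z.interp) ∧
     DD γ (.cm (.cm x.interp y.interp) z.interp) (.cm x.interp (.cm y.interp z.interp)) ∧
     DD γ (.par (.par x.interp y.interp) z.interp) (.par x.interp (.par y.interp z.interp))) := by
  intro n
  induction n using Nat.strong_induction_on with
  | _ n ih =>
  have hγad : ∀ e, γ e ATD.delta = ATD.delta := fun e => by rw [hc]; exact hd e
  have LM' : ∀ (x y z : B A), x.size + y.size + z.size < n →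
      DD γ (.lm (.lm x.interp y.interp) z.interp) (.lm x.interp (.par y.interp z.interp)) :=
    fun x y z h => (ih _ h x y z le_rfl).1
  have CL' : ∀ (x y z : B A), x.size + y.size + z.size < n →
      DD γ (.cm x.interp (.lm y.interp z.interp)) (.lm (.cm x.interp y.interp) z.interp) :=
    fun x y z h => (ih _ h x y z le_rfl).2.1
  have CA' : ∀ (x y z : B A), x.size + y.size + z.size < n →
      DD γ (.cm (.cm x.interp y.interp) z.interp) (.cm x.interp (.cm y.interp z.interp)) :=
    fun x y z h => (ih _ h x y z le_rfl).2.2.1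
  have PA' : ∀ (x y z : B A), x.size + y.size + z.size < n →
      DD γ (.par (.par x.interp y.interp) z.interp)
        (.par x.interp (.par y.interp z.interp)) :=
    fun x y z h => (ih _ h x y z le_rfl).2.2.2
  intro x0 y0 z0 hn0
  ----------------------------------------------------------------
  have hLM : ∀ (x y z : B A), x.size + y.size + z.size ≤ n →
      DD γ (.lm (.lm x.interp y.interp) z.interp) (.lm x.interp (.par y.interp z.interp)) := by
    intro x y z hn
    cases x with
    | und a =>
        exact ((lmL _ (Deriv.CM2DR a _)).trans (Deriv.CM3DR a _ _)).trans
          (Deriv.symm (Deriv.CM2DR a _))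
    | pre a t =>
        have hPA := PA' t y z (by simp [B.size] at hn; omega)
        exact (((lmL _ (Deriv.CM3DR a _ _)).trans (Deriv.CM3DR a _ _)).trans
          (seqR _ hPA)).trans (Deriv.symm (Deriv.CM3DR a _ _))
    | alt x1 x2 =>
        have hs1 := B.size_pos x1
        have hs2 := B.size_pos x2
        have h1 := LM' x1 y z (by simp [B.size] at hn; omega)
        have h2 := LM' x2 y z (by simp [B.size] at hn; omega)
        exact (((lmL _ (Deriv.CM4 _ _ _)).trans (Deriv.CM4 _ _ _)).trans
          (Deriv.altCongr h1 h2)).trans (Deriv.symm (Deriv.CM4 _ _ _))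
    | delay t =>
        rcases hdy : y.dpart with _ | w
        · refine ((lmL _ (lmDelayNone t.interp hdy)).trans (lmDeltaL _)).trans
            (Deriv.symm ?_)
          exact (lmR _ (parCor y z)).trans (lmDelayNone _ (dpart_bpar_none (Or.inl hdy)))
        · rcases hdz : z.dpart with _ | v
          · refine ((lmL _ (lmDelaySome t.interp hdy)).trans (lmDelayNone _ hdz)).trans
              (Deriv.symm ?_)
            exact (lmR _ (parCor y z)).trans (lmDelayNone _ (dpart_bpar_none (Or.inr hdz)))
          · have hw := dpart_size hdy
            have hv := dpart_size hdz
            have hLMih := LM' t w v (by simp [B.size] at hn; omega)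
            obtain ⟨D, hD, hd'⟩ := dpart_bpar_some (γ := γ) hdy hdz
            refine (((lmL _ (lmDelaySome t.interp hdy)).trans
              (lmDelaySome _ hdz)).trans (Deriv.delayCongr hLMih)).trans (Deriv.symm ?_)
            exact ((lmR _ (parCor y z)).trans (lmDelaySome t.interp hD)).trans
              (Deriv.delayCongr (lmR _ hd'))
  ----------------------------------------------------------------
  have clStepY : ∀ {X Y1 Y2 Z : Tm A},
      DD γ (.cm X (.lm Y1 Z)) (.lm (.cm X Y1) Z) →
      DD γ (.cm X (.lm Y2 Z)) (.lm (.cm X Y2) Z) →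
      DD γ (.cm X (.lm (.alt Y1 Y2) Z)) (.lm (.cm X (.alt Y1 Y2)) Z) := by
    intro X Y1 Y2 Z h1 h2
    exact ((((cmR _ (Deriv.CM4 _ _ _)).trans (Deriv.CM9 _ _ _)).trans
      (Deriv.altCongr h1 h2)).trans (Deriv.symm (Deriv.CM4 _ _ _))).trans
      (lmL _ (Deriv.symm (Deriv.CM9 _ _ _)))
  have hCL : ∀ (x y z : B A), x.size + y.size + z.size ≤ n →
      DD γ (.cm x.interp (.lm y.interp z.interp)) (.lm (.cm x.interp y.interp) z.interp) := by
    intro x y z hn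
    cases x with
    | alt x1 x2 =>
        have hs1 := B.size_pos x1
        have hs2 := B.size_pos x2
        have h1 := CL' x1 y z (by simp [B.size] at hn; omega)
        have h2 := CL' x2 y z (by simp [B.size] at hn; omega)
        exact (((Deriv.CM8 _ _ _).trans (Deriv.altCongr h1 h2)).trans
          (Deriv.symm (Deriv.CM4 _ _ _))).trans (lmL _ (Deriv.symm (Deriv.CM8 _ _ _)))
    | und a =>
      cases y with
      | alt y1 y2 =>
          have hs1 := B.size_pos y1
          have hs2 := B.size_pos y2
          exact clStepY (CL' (B.und a) y1 z (by simp [B.size] at hn ⊢; omega))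
            (CL' (B.und a) y2 z (by simp [B.size] at hn ⊢; omega))
      | und b =>
          refine ((cmR _ (Deriv.CM2DR b _)).trans (cmNT hc a b none (some z.interp))).trans
            (Deriv.symm ?_)
          exact (lmL _ (Deriv.CFDR a b)).trans (Deriv.CM2DR _ _)
      | pre b u =>
          refine ((cmR _ (Deriv.CM3DR b _ _)).trans
            (cmNT hc a b none (some (.par u.interp z.interp)))).trans (Deriv.symm ?_)
          exact (lmL _ (cmNT hc a b none (some u.interp))).trans (Deriv.CM3DR _ _ _)
      | delay u =>
          rcases hdz : z.dpart with _ | v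
          · refine ((cmR _ (lmDelayNone u.interp hdz)).trans
              (cmDeltaR hc hd (B.und a))).trans (Deriv.symm ?_)
            exact (lmL _ (cmNTSig u.interp a none)).trans (lmDeltaL _)
          · refine ((cmR _ (lmDelaySome u.interp hdz)).trans
              (cmNTSig _ a none)).trans (Deriv.symm ?_)
            exact (lmL _ (cmNTSig u.interp a none)).trans (lmDeltaL _)
    | pre a t =>
      cases y with
      | alt y1 y2 =>
          have hs1 := B.size_pos y1
          have hs2 := B.size_pos y2
          exact clStepY (CL' (B.pre a t) y1 z (by simp [B.size] at hn ⊢; omega))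
            (CL' (B.pre a t) y2 z (by simp [B.size] at hn ⊢; omega))
      | und b =>
          refine ((cmR _ (Deriv.CM2DR b _)).trans
            (cmNT hc a b (some t.interp) (some z.interp))).trans (Deriv.symm ?_)
          exact (lmL _ (cmNT hc a b (some t.interp) none)).trans (Deriv.CM3DR _ _ _)
      | pre b u =>
          have hs1 := B.size_pos t
          have hs2 := B.size_pos u
          have hPA := PA' t u z (by simp [B.size] at hn; omega)
          refine ((cmR _ (Deriv.CM3DR b _ _)).trans
            (cmNT hc a b (some t.interp) (some (.par u.interp z.interp)))).trans
            (Deriv.symm ?_)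
          exact ((lmL _ (cmNT hc a b (some t.interp) (some u.interp))).trans
            (Deriv.CM3DR _ _ _)).trans (seqR _ hPA)
      | delay u =>
          rcases hdz : z.dpart with _ | v
          · refine ((cmR _ (lmDelayNone u.interp hdz)).trans
              (cmDeltaR hc hd (B.pre a t))).trans (Deriv.symm ?_)
            exact (lmL _ (cmNTSig u.interp a (some t.interp))).trans (lmDeltaL _)
          · refine ((cmR _ (lmDelaySome u.interp hdz)).trans
              (cmNTSig _ a (some t.interp))).trans (Deriv.symm ?_)
            exact (lmL _ (cmNTSig u.interp a (some t.interp))).trans (lmDeltaL _)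
    | delay t =>
      cases y with
      | alt y1 y2 =>
          have hs1 := B.size_pos y1
          have hs2 := B.size_pos y2
          exact clStepY (CL' (B.delay t) y1 z (by simp [B.size] at hn ⊢; omega))
            (CL' (B.delay t) y2 z (by simp [B.size] at hn ⊢; omega))
      | und b =>
          refine ((cmR _ (Deriv.CM2DR b _)).trans (cmSigNT t.interp b (some z.interp))).trans
            (Deriv.symm ?_)
          exact (lmL _ (cmSigNT t.interp b none)).trans (lmDeltaL _)
      | pre b u =>
          refine ((cmR _ (Deriv.CM3DR b _ _)).trans
            (cmSigNT t.interp b (some (.par u.interp z.interp)))).trans (Deriv.symm ?_)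
          exact (lmL _ (cmSigNT t.interp b (some u.interp))).trans (lmDeltaL _)
      | delay u =>
          rcases hdz : z.dpart with _ | v
          · refine ((cmR _ (lmDelayNone u.interp hdz)).trans
              (cmSigNT t.interp .delta none)).trans (Deriv.symm ?_)
            exact (lmL _ (Deriv.DRCM5 _ _)).trans (lmDelayNone _ hdz)
          · have hv := dpart_size hdz
            have hCLih := CL' t u v (by simp [B.size] at hn; omega)
            refine (((cmR _ (lmDelaySome u.interp hdz)).trans (Deriv.DRCM5 _ _)).trans
              (Deriv.delayCongr hCLih)).trans (Deriv.symm ?_)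
            exact (lmL _ (Deriv.DRCM5 _ _)).trans (lmDelaySome _ hdz)
  ----------------------------------------------------------------
  have hCA : ∀ (x y z : B A), x.size + y.size + z.size ≤ n →
      DD γ (.cm (.cm x.interp y.interp) z.interp)
        (.cm x.interp (.cm y.interp z.interp)) := by
    intro x y z hn
    cases x with
    | alt x1 x2 =>
        have hs1 := B.size_pos x1
        have hs2 := B.size_pos x2
        have h1 := CA' x1 y z (by simp [B.size] at hn; omega)
        have h2 := CA' x2 y z (by simp [B.size] at hn; omega)
        exact (((cmL _ (Deriv.CM8 _ _ _)).trans (Deriv.CM8 _ _ _)).trans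
          (Deriv.altCongr h1 h2)).trans (Deriv.symm (Deriv.CM8 _ _ _))
    | und a =>
      cases y with
      | alt y1 y2 =>
          have hs1 := B.size_pos y1
          have hs2 := B.size_pos y2
          exact caStepY (CA' (B.und a) y1 z (by simp [B.size] at hn ⊢; omega))
            (CA' (B.und a) y2 z (by simp [B.size] at hn ⊢; omega))
      | und b =>
        cases z with
        | alt z1 z2 =>
            have hs1 := B.size_pos z1
            have hs2 := B.size_pos z2
            exact caStepZ (CA' (B.und a) (B.und b) z1 (by simp [B.size] at hn ⊢; omega))
              (CA' (B.und a) (B.und b) z2 (by simp [B.size] at hn ⊢; omega))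
        | und c =>
            refine ((cmL _ (cmNT hc a b none none)).trans
              (cmNT hc (γ a b) c none none)).trans ?_
            rw [ha a b c]
            exact Deriv.symm ((cmR _ (cmNT hc b c none none)).trans
              (cmNT hc a (γ b c) none none))
        | pre c v =>
            refine ((cmL _ (cmNT hc a b none none)).trans
              (cmNT hc (γ a b) c none (some v.interp))).trans ?_
            rw [ha a b c]
            exact Deriv.symm ((cmR _ (cmNT hc b c none (some v.interp))).trans
              (cmNT hc a (γ b c) none (some v.interp)))
        | delay v =>
            refine ((cmL _ (cmNT hc a b none none)).trans
              (cmNTSig v.interp (γ a b) none)).trans (Deriv.symm ?_)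
            exact (cmR _ (cmNTSig v.interp b none)).trans
              ((cmNT hc a .delta none none).trans (by rw [hγad a]; exact ntDelta _))
      | pre b u =>
        cases z with
        | alt z1 z2 =>
            have hs1 := B.size_pos z1
            have hs2 := B.size_pos z2
            exact caStepZ (CA' (B.und a) (B.pre b u) z1 (by simp [B.size] at hn ⊢; omega))
              (CA' (B.und a) (B.pre b u) z2 (by simp [B.size] at hn ⊢; omega))
        | und c =>
            refine ((cmL _ (cmNT hc a b none (some u.interp))).trans
              (cmNT hc (γ a b) c (some u.interp) none)).trans ?_
            rw [ha a b c]
            exact Deriv.symm ((cmR _ (cmNT hc b c (some u.interp) none)).trans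
              (cmNT hc a (γ b c) none (some u.interp)))
        | pre c v =>
            refine ((cmL _ (cmNT hc a b none (some u.interp))).trans
              (cmNT hc (γ a b) c (some u.interp) (some v.interp))).trans ?_
            rw [ha a b c]
            exact Deriv.symm ((cmR _ (cmNT hc b c (some u.interp) (some v.interp))).trans
              (cmNT hc a (γ b c) none (some (.par u.interp v.interp))))
        | delay v =>
            refine ((cmL _ (cmNT hc a b none (some u.interp))).trans
              (cmNTSig v.interp (γ a b) (some u.interp))).trans (Deriv.symm ?_)
            exact (cmR _ (cmNTSig v.interp b (some u.interp))).trans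
              ((cmNT hc a .delta none none).trans (by rw [hγad a]; exact ntDelta _))
      | delay u =>
        cases z with
        | alt z1 z2 =>
            have hs1 := B.size_pos z1
            have hs2 := B.size_pos z2
            exact caStepZ (CA' (B.und a) (B.delay u) z1 (by simp [B.size] at hn ⊢; omega))
              (CA' (B.und a) (B.delay u) z2 (by simp [B.size] at hn ⊢; omega))
        | und c =>
            refine ((cmL _ (cmNTSig u.interp a none)).trans
              (cmDeltaL hd (B.und c))).trans (Deriv.symm ?_)
            exact (cmR _ (cmSigNT u.interp c none)).trans
              ((cmNT hc a .delta none none).trans (by rw [hγad a]; exact ntDelta _))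
        | pre c v =>
            refine ((cmL _ (cmNTSig u.interp a none)).trans
              (cmDeltaL hd (B.pre c v))).trans (Deriv.symm ?_)
            exact (cmR _ (cmSigNT u.interp c (some v.interp))).trans
              ((cmNT hc a .delta none none).trans (by rw [hγad a]; exact ntDelta _))
        | delay v =>
            refine ((cmL _ (cmNTSig u.interp a none)).trans
              (cmDeltaL hd (B.delay v))).trans (Deriv.symm ?_)
            exact (cmR _ (Deriv.DRCM5 _ _)).trans (cmNTSig _ a none)
    | pre a t =>
      cases y with
      | alt y1 y2 =>
          have hs1 := B.size_pos y1
          have hs2 := B.size_pos y2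
          exact caStepY (CA' (B.pre a t) y1 z (by simp [B.size] at hn ⊢; omega))
            (CA' (B.pre a t) y2 z (by simp [B.size] at hn ⊢; omega))
      | und b =>
        cases z with
        | alt z1 z2 =>
            have hs1 := B.size_pos z1
            have hs2 := B.size_pos z2
            exact caStepZ (CA' (B.pre a t) (B.und b) z1 (by simp [B.size] at hn ⊢; omega))
              (CA' (B.pre a t) (B.und b) z2 (by simp [B.size] at hn ⊢; omega))
        | und c =>
            refine ((cmL _ (cmNT hc a b (some t.interp) none)).trans
              (cmNT hc (γ a b) c (some t.interp) none)).trans ?_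
            rw [ha a b c]
            exact Deriv.symm ((cmR _ (cmNT hc b c none none)).trans
              (cmNT hc a (γ b c) (some t.interp) none))
        | pre c v =>
            refine ((cmL _ (cmNT hc a b (some t.interp) none)).trans
              (cmNT hc (γ a b) c (some t.interp) (some v.interp))).trans ?_
            rw [ha a b c]
            exact Deriv.symm ((cmR _ (cmNT hc b c none (some v.interp))).trans
              (cmNT hc a (γ b c) (some t.interp) (some v.interp)))
        | delay v =>
            refine ((cmL _ (cmNT hc a b (some t.interp) none)).trans
              (cmNTSig v.interp (γ a b) (some t.interp))).trans (Deriv.symm ?_)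
            exact (cmR _ (cmNTSig v.interp b none)).trans
              ((cmNT hc a .delta (some t.interp) none).trans
                (by rw [hγad a]; exact ntDelta _))
      | pre b u =>
        cases z with
        | alt z1 z2 =>
            have hs1 := B.size_pos z1
            have hs2 := B.size_pos z2
            exact caStepZ (CA' (B.pre a t) (B.pre b u) z1 (by simp [B.size] at hn ⊢; omega))
              (CA' (B.pre a t) (B.pre b u) z2 (by simp [B.size] at hn ⊢; omega))
        | und c =>
            refine ((cmL _ (cmNT hc a b (some t.interp) (some u.interp))).trans
              (cmNT hc (γ a b) c (some (.par t.interp u.interp)) none)).trans ?_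
            rw [ha a b c]
            exact Deriv.symm ((cmR _ (cmNT hc b c (some u.interp) none)).trans
              (cmNT hc a (γ b c) (some t.interp) (some u.interp)))
        | pre c v =>
            have hs1 := B.size_pos t
            have hs2 := B.size_pos u
            have hs3 := B.size_pos v
            have hPA := PA' t u v (by simp [B.size] at hn; omega)
            refine (((cmL _ (cmNT hc a b (some t.interp) (some u.interp))).trans
              (cmNT hc (γ a b) c (some (.par t.interp u.interp)) (some v.interp))).trans
              (seqR _ hPA)).trans ?_
            rw [ha a b c]
            exact Deriv.symm ((cmR _ (cmNT hc b c (some u.interp) (some v.interp))).trans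
              (cmNT hc a (γ b c) (some t.interp) (some (.par u.interp v.interp))))
        | delay v =>
            refine ((cmL _ (cmNT hc a b (some t.interp) (some u.interp))).trans
              (cmNTSig v.interp (γ a b) (some (.par t.interp u.interp)))).trans
              (Deriv.symm ?_)
            exact (cmR _ (cmNTSig v.interp b (some u.interp))).trans
              ((cmNT hc a .delta (some t.interp) none).trans
                (by rw [hγad a]; exact ntDelta _))
      | delay u =>
        cases z with
        | alt z1 z2 =>
            have hs1 := B.size_pos z1
            have hs2 := B.size_pos z2
            exact caStepZ (CA' (B.pre a t) (B.delay u) z1 (by simp [B.size] at hn ⊢; omega))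
              (CA' (B.pre a t) (B.delay u) z2 (by simp [B.size] at hn ⊢; omega))
        | und c =>
            refine ((cmL _ (cmNTSig u.interp a (some t.interp))).trans
              (cmDeltaL hd (B.und c))).trans (Deriv.symm ?_)
            exact (cmR _ (cmSigNT u.interp c none)).trans
              ((cmNT hc a .delta (some t.interp) none).trans
                (by rw [hγad a]; exact ntDelta _))
        | pre c v =>
            refine ((cmL _ (cmNTSig u.interp a (some t.interp))).trans
              (cmDeltaL hd (B.pre c v))).trans (Deriv.symm ?_)
            exact (cmR _ (cmSigNT u.interp c (some v.interp))).trans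
              ((cmNT hc a .delta (some t.interp) none).trans
                (by rw [hγad a]; exact ntDelta _))
        | delay v =>
            refine ((cmL _ (cmNTSig u.interp a (some t.interp))).trans
              (cmDeltaL hd (B.delay v))).trans (Deriv.symm ?_)
            exact (cmR _ (Deriv.DRCM5 _ _)).trans (cmNTSig _ a (some t.interp))
    | delay t =>
      cases y with
      | alt y1 y2 =>
          have hs1 := B.size_pos y1
          have hs2 := B.size_pos y2
          exact caStepY (CA' (B.delay t) y1 z (by simp [B.size] at hn ⊢; omega))
            (CA' (B.delay t) y2 z (by simp [B.size] at hn ⊢; omega))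
      | und b =>
        cases z with
        | alt z1 z2 =>
            have hs1 := B.size_pos z1
            have hs2 := B.size_pos z2
            exact caStepZ (CA' (B.delay t) (B.und b) z1 (by simp [B.size] at hn ⊢; omega))
              (CA' (B.delay t) (B.und b) z2 (by simp [B.size] at hn ⊢; omega))
        | und c =>
            refine ((cmL _ (cmSigNT t.interp b none)).trans
              (cmDeltaL hd (B.und c))).trans (Deriv.symm ?_)
            exact (cmR _ (cmNT hc b c none none)).trans
              (cmSigNT t.interp (γ b c) none)
        | pre c v =>
            refine ((cmL _ (cmSigNT t.interp b none)).trans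
              (cmDeltaL hd (B.pre c v))).trans (Deriv.symm ?_)
            exact (cmR _ (cmNT hc b c none (some v.interp))).trans
              (cmSigNT t.interp (γ b c) (some v.interp))
        | delay v =>
            refine ((cmL _ (cmSigNT t.interp b none)).trans
              (cmDeltaL hd (B.delay v))).trans (Deriv.symm ?_)
            exact (cmR _ (cmNTSig v.interp b none)).trans (cmSigNT t.interp .delta none)
      | pre b u =>
        cases z with
        | alt z1 z2 =>
            have hs1 := B.size_pos z1
            have hs2 := B.size_pos z2
            exact caStepZ (CA' (B.delay t) (B.pre b u) z1 (by simp [B.size] at hn ⊢; omega))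
              (CA' (B.delay t) (B.pre b u) z2 (by simp [B.size] at hn ⊢; omega))
        | und c =>
            refine ((cmL _ (cmSigNT t.interp b (some u.interp))).trans
              (cmDeltaL hd (B.und c))).trans (Deriv.symm ?_)
            exact (cmR _ (cmNT hc b c (some u.interp) none)).trans
              (cmSigNT t.interp (γ b c) (some u.interp))
        | pre c v =>
            refine ((cmL _ (cmSigNT t.interp b (some u.interp))).trans
              (cmDeltaL hd (B.pre c v))).trans (Deriv.symm ?_)
            exact (cmR _ (cmNT hc b c (some u.interp) (some v.interp))).trans
              (cmSigNT t.interp (γ b c) (some (.par u.interp v.interp)))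
        | delay v =>
            refine ((cmL _ (cmSigNT t.interp b (some u.interp))).trans
              (cmDeltaL hd (B.delay v))).trans (Deriv.symm ?_)
            exact (cmR _ (cmNTSig v.interp b (some u.interp))).trans
              (cmSigNT t.interp .delta none)
      | delay u =>
        cases z with
        | alt z1 z2 =>
            have hs1 := B.size_pos z1
            have hs2 := B.size_pos z2
            exact caStepZ (CA' (B.delay t) (B.delay u) z1 (by simp [B.size] at hn ⊢; omega))
              (CA' (B.delay t) (B.delay u) z2 (by simp [B.size] at hn ⊢; omega))
        | und c =>
            refine ((cmL _ (Deriv.DRCM5 _ _)).trans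
              (cmSigNT (.cm t.interp u.interp) c none)).trans (Deriv.symm ?_)
            exact (cmR _ (cmSigNT u.interp c none)).trans (cmSigNT t.interp .delta none)
        | pre c v =>
            refine ((cmL _ (Deriv.DRCM5 _ _)).trans
              (cmSigNT (.cm t.interp u.interp) c (some v.interp))).trans (Deriv.symm ?_)
            exact (cmR _ (cmSigNT u.interp c (some v.interp))).trans
              (cmSigNT t.interp .delta none)
        | delay v =>
            have hs1 := B.size_pos t
            have hs2 := B.size_pos u
            have hs3 := B.size_pos v
            have hCAih := CA' t u v (by simp [B.size] at hn; omega)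
            refine (((cmL _ (Deriv.DRCM5 _ _)).trans (Deriv.DRCM5 _ _)).trans
              (Deriv.delayCongr hCAih)).trans (Deriv.symm ?_)
            exact (cmR _ (Deriv.DRCM5 _ _)).trans (Deriv.DRCM5 _ _)
  ----------------------------------------------------------------
  -- PA at the given triple
  refine ⟨hLM x0 y0 z0 hn0, hCL x0 y0 z0 hn0, hCA x0 y0 z0 hn0, ?_⟩
  set X := x0.interp
  set Y := y0.interp
  set Z := z0.interp
  set tA := Tm.lm X (.par Y Z) with htA
  set tB := Tm.lm Y (.par X Z) with htB
  set tC := Tm.lm (.cm X Y) Z with htC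
  set tD := Tm.lm Z (.par X Y) with htD
  set tE := Tm.lm (.cm Z X) Y with htE
  set tF := Tm.lm (.cm Z Y) X with htF
  set tG := Tm.cm (.cm X Y) Z with htG
  have hL1 : DD γ (.lm (.par X Y) Z) (sL [tA, tB, tC]) := by
    refine Deriv.trans ?_ (flat3 (sL_single tA) (sL_single tB) (sL_single tC))
    refine ((lmL _ (Deriv.CM1 X Y)).trans (Deriv.CM4 _ _ _)).trans ?_
    refine (altL _ (Deriv.CM4 _ _ _)).trans ?_
    exact altL _ (Deriv.altCongr (hLM x0 y0 z0 hn0) (hLM y0 x0 z0 (by omega)))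
  have hL3 : DD γ (.cm (.par X Y) Z) (sL [tE, tF, tG]) := by
    refine Deriv.trans ?_ (flat3 (sL_single tE) (sL_single tF) (sL_single tG))
    refine ((cmL _ (Deriv.CM1 X Y)).trans (Deriv.CM8 _ _ _)).trans ?_
    refine (altL _ (Deriv.CM8 _ _ _)).trans (altL _ (Deriv.altCongr ?_ ?_))
    · refine ((cmL _ (lmCor x0 y0)).trans (cmComm hc (blm γ x0 y0) z0)).trans ?_
      exact ((cmR _ (Deriv.symm (lmCor x0 y0))).trans (hCL z0 x0 y0 (by omega)))
    · refine ((cmL _ (lmCor y0 x0)).trans (cmComm hc (blm γ y0 x0) z0)).trans ?_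
      exact ((cmR _ (Deriv.symm (lmCor y0 x0))).trans (hCL z0 y0 x0 (by omega)))
  have hLHS : DD γ (.par (.par X Y) Z) (sL [tA, tB, tC, tD, tE, tF, tG]) := by
    refine (Deriv.CM1 _ _).trans ?_
    exact flat3 hL1 (sL_single tD) hL3
  have hR2 : DD γ (.lm (.par Y Z) X) (sL [tB, tD, tF]) := by
    refine Deriv.trans ?_ (flat3 (sL_single tB) (sL_single tD) (sL_single tF))
    refine ((lmL _ (Deriv.CM1 Y Z)).trans (Deriv.CM4 _ _ _)).trans ?_
    refine (altL _ (Deriv.CM4 _ _ _)).trans ?_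
    refine Deriv.altCongr (Deriv.altCongr ?_ ?_) (lmL _ (cmComm hc y0 z0))
    · exact (hLM y0 z0 x0 (by omega)).trans (lmR _ (parComm hc z0 x0))
    · exact (hLM z0 y0 x0 (by omega)).trans (lmR _ (parComm hc y0 x0))
  have hR3 : DD γ (.cm X (.par Y Z)) (sL [tC, tE, tG]) := by
    refine Deriv.trans ?_ (flat3 (sL_single tC) (sL_single tE) (sL_single tG))
    refine ((cmR _ (Deriv.CM1 Y Z)).trans (Deriv.CM9 _ _ _)).trans ?_
    refine (altL _ (Deriv.CM9 _ _ _)).trans ?_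
    refine Deriv.altCongr (Deriv.altCongr (hCL x0 y0 z0 hn0) ?_)
      (Deriv.symm (hCA x0 y0 z0 hn0))
    exact (hCL x0 z0 y0 (by omega)).trans (lmL _ (cmComm hc x0 z0))
  have hRHS : DD γ (.par X (.par Y Z)) (sL [tA, tB, tD, tF, tC, tE, tG]) := by
    refine (Deriv.CM1 _ _).trans ?_
    exact flat3 (sL_single tA) hR2 hR3
  have hperm : List.Perm [tA, tB, tC, tD, tE, tF, tG] [tA, tB, tD, tF, tC, tE, tG] := by
    refine List.Perm.cons tA (List.Perm.cons tB ?_)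
    refine (List.Perm.swap tD tC [tE, tF, tG]).trans (List.Perm.cons tD ?_)
    exact (List.Perm.cons tC (List.Perm.swap tF tE [tG])).trans
      (List.Perm.swap tF tC [tE, tG])
  exact hLHS.trans ((sL_perm hperm).trans (Deriv.symm hRHS))

lemma parAssocB (hc : ∀ a b, γ a b = γ b a) (ha : ∀ a b c, γ (γ a b) c = γ a (γ b c))
    (hd : ∀ a, γ ATD.delta a = ATD.delta) (x y z : B A) :
    DD γ (.par (.par x.interp y.interp) z.interp)
      (.par x.interp (.par y.interp z.interp)) :=
  (sc_main hc ha hd (x.size + y.size + z.size) x y z le_rfl).2.2.2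

end partE

section partF
open B
variable {A : Type} {γ : ATD A → ATD A → ATD A}

def bseq : B A → B A → B A
  | .und a, c => .pre a c
  | .pre a t, c => .pre a (bseq t c)
  | .delay t, c => .delay (bseq t c)
  | .alt t u, c => .alt (bseq t c) (bseq u c)

lemma bseqCor : ∀ (x c : B A), DD γ (.seq x.interp c.interp) (bseq x c).interp := by
  intro x
  induction x with
  | und a => intro c; exact .refl _
  | pre a t ih => intro c; exact (Deriv.A5 _ _ _).trans (seqR _ (ih c))
  | delay t ih => intro c; exact (Deriv.DRT2 _ _).trans (Deriv.delayCongr (ih c))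
  | alt t u iht ihu => intro c; exact (Deriv.A4 _ _ _).trans (Deriv.altCongr (iht c) (ihu c))

def bto : B A → B A
  | .und a => .und a
  | .pre a t => .pre a t
  | .delay _ => .und .delta
  | .alt t u => .alt (bto t) (bto u)

lemma btoCor : ∀ (x : B A), DD γ (.timeout x.interp) (bto x).interp := by
  intro x
  induction x with
  | und a => exact Deriv.DRTO1 a
  | pre a t ih => exact toNT a (some t.interp)
  | delay t ih => exact Deriv.DRTO4 _
  | alt t u iht ihu => exact (Deriv.DRTO2 _ _).trans (Deriv.altCongr iht ihu)

open Classical in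
noncomputable def eatom (H : Set A) : ATD A → ATD A
  | .act b => if b ∈ H then .delta else .act b
  | .tau => .tau
  | .delta => .delta

noncomputable def bencap (H : Set A) : B A → B A
  | .und a => .und (eatom H a)
  | .pre a t => .pre (eatom H a) (bencap H t)
  | .delay t => .delay (bencap H t)
  | .alt t u => .alt (bencap H t) (bencap H u)

lemma encapAtom (H : Set A) (a : ATD A) :
    DD γ (.encap H (.und a)) (.und (eatom H a)) := by
  cases a with
  | act b =>
      by_cases hb : b ∈ H
      · simp only [eatom, if_pos hb]
        exact Deriv.D2DR b H hb
      · simp only [eatom, if_neg hb]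
        refine Deriv.D1DR _ H ?_
        intro b' e hb'
        cases e
        exact hb hb'
  | tau => exact Deriv.D1DR _ H (fun b' e => nomatch e)
  | delta => exact Deriv.D1DR _ H (fun b' e => nomatch e)

lemma bencapCor (H : Set A) : ∀ (x : B A), DD γ (.encap H x.interp) (bencap H x).interp := by
  intro x
  induction x with
  | und a => exact encapAtom H a
  | pre a t ih => exact (Deriv.D4 H _ _).trans (Deriv.seqCongr (encapAtom H a) ih)
  | delay t ih => exact (Deriv.DRD H _).trans (Deriv.delayCongr ih)
  | alt t u iht ihu => exact (Deriv.D3 H _ _).trans (Deriv.altCongr iht ihu)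

open Classical in
noncomputable def aatom (I : Set A) : ATD A → ATD A
  | .act b => if b ∈ I then .tau else .act b
  | .tau => .tau
  | .delta => .delta

noncomputable def babstr (I : Set A) : B A → B A
  | .und a => .und (aatom I a)
  | .pre a t => .pre (aatom I a) (babstr I t)
  | .delay t => .delay (babstr I t)
  | .alt t u => .alt (babstr I t) (babstr I u)

lemma abstrAtom (I : Set A) (a : ATD A) :
    DD γ (.abstr I (.und a)) (.und (aatom I a)) := by
  cases a with
  | act b =>
      by_cases hb : b ∈ I
      · simp only [aatom, if_pos hb]
        exact Deriv.TI2DR b I hb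
      · simp only [aatom, if_neg hb]
        refine Deriv.TI1DR _ I ?_
        intro b' e hb'
        cases e
        exact hb hb'
  | tau => exact Deriv.TI1DR _ I (fun b' e => nomatch e)
  | delta => exact Deriv.TI1DR _ I (fun b' e => nomatch e)

lemma babstrCor (I : Set A) : ∀ (x : B A), DD γ (.abstr I x.interp) (babstr I x).interp := by
  intro x
  induction x with
  | und a => exact abstrAtom I a
  | pre a t ih => exact (Deriv.TI4 I _ _).trans (Deriv.seqCongr (abstrAtom I a) ih)
  | delay t ih => exact (Deriv.DRTI I _).trans (Deriv.delayCongr ih)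
  | alt t u iht ihu => exact (Deriv.TI3 I _ _).trans (Deriv.altCongr iht ihu)

theorem elimB : ∀ (t : Tm A), Tm.Plain t → ∃ b : B A, DD γ t b.interp := by
  intro t
  induction t with
  | und a => exact fun _ => ⟨.und a, .refl _⟩
  | alt t u iht ihu =>
      intro h
      obtain ⟨b1, h1⟩ := iht h.1
      obtain ⟨b2, h2⟩ := ihu h.2
      exact ⟨.alt b1 b2, Deriv.altCongr h1 h2⟩
  | seq t u iht ihu =>
      intro h
      obtain ⟨b1, h1⟩ := iht h.1
      obtain ⟨b2, h2⟩ := ihu h.2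
      exact ⟨bseq b1 b2, (Deriv.seqCongr h1 h2).trans (bseqCor b1 b2)⟩
  | delay t iht =>
      intro h
      obtain ⟨b1, h1⟩ := iht h
      exact ⟨.delay b1, Deriv.delayCongr h1⟩
  | par t u iht ihu =>
      intro h
      obtain ⟨b1, h1⟩ := iht h.1
      obtain ⟨b2, h2⟩ := ihu h.2
      exact ⟨bpar γ b1 b2, (Deriv.parCongr h1 h2).trans (parCor b1 b2)⟩
  | lm t u iht ihu =>
      intro h
      obtain ⟨b1, h1⟩ := iht h.1
      obtain ⟨b2, h2⟩ := ihu h.2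
      exact ⟨blm γ b1 b2, (Deriv.lmCongr h1 h2).trans (lmCor b1 b2)⟩
  | cm t u iht ihu =>
      intro h
      obtain ⟨b1, h1⟩ := iht h.1
      obtain ⟨b2, h2⟩ := ihu h.2
      exact ⟨bcm γ b1 b2, (Deriv.cmCongr h1 h2).trans (cmCor b1 b2)⟩
  | encap H t iht =>
      intro h
      obtain ⟨b1, h1⟩ := iht h
      exact ⟨bencap H b1, (Deriv.encapCongr H h1).trans (bencapCor H b1)⟩
  | abstr I t iht =>
      intro h
      obtain ⟨b1, h1⟩ := iht h
      exact ⟨babstr I b1, (Deriv.abstrCongr I h1).trans (babstrCor I b1)⟩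
  | timeout t iht =>
      intro h
      obtain ⟨b1, h1⟩ := iht h
      exact ⟨bto b1, (Deriv.timeoutCongr h1).trans (btoCor b1)⟩
  | var X => exact fun h => h.elim
  | recc E X => exact fun h => absurd h (by simp [Tm.Plain])
  | shift t iht => exact fun h => h.elim
  | tfp t iht => exact fun h => h.elim

end partF

end PAssoc

/-- Associativity of parallel composition modulo ACP_drt^τ: for all closed
ACP_drt^τ terms t, t', t'', the equation (t ∥ t') ∥ t'' = t ∥ (t' ∥ t'') is
derivable from the axioms of ACP_drt^τ. -/
theorem par_assoc_derivable {A : Type} [Fintype A] (γ : ATD A → ATD A → ATD A)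
    (hγcomm : ∀ a b, γ a b = γ b a)
    (hγassoc : ∀ a b c, γ (γ a b) c = γ a (γ b c))
    (hγtau : ∀ a, γ ATD.tau a = ATD.delta)
    (hγdelta : ∀ a, γ ATD.delta a = ATD.delta)
    (t t' t'' : Tm A) (ht : Tm.Plain t) (ht' : Tm.Plain t') (ht'' : Tm.Plain t'') :
    Deriv γ NoAx false (.par (.par t t') t'') (.par t (.par t' t'')) := by
  obtain ⟨b1, h1⟩ := PAssoc.elimB (γ := γ) t ht
  obtain ⟨b2, h2⟩ := PAssoc.elimB (γ := γ) t' ht'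
  obtain ⟨b3, h3⟩ := PAssoc.elimB (γ := γ) t'' ht''
  refine Deriv.trans (Deriv.parCongr (Deriv.parCongr h1 h2) h3) ?_
  refine Deriv.trans (PAssoc.parAssocB hγcomm hγassoc hγdelta b1 b2 b3) ?_
  exact Deriv.symm (Deriv.parCongr h1 (Deriv.parCongr h2 h3))
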